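/- arXiv:2309.07596 — 3 statements merged into one kernel-verified Lean document; each statement's English description precedes it below -/
import Mathlib

section
/- Let q1, q2 ∈ ℂ^× be generic, u ∈ ℂ^×, and let λ be a partition. Define χ_{(i,j)} = u q1^{i-1} q2^{j-1} for a box (i,j), S(z) = (1-q1 z)(1-q2 z)/((1-z)(1-q1 q2 z)), and Y_λ(z,u) = (1 - u/z) ∏_{x∈λ} S(χ_x/z). Then Y_λ(z,u) = ∏_{x ∈ A(λ)} (1 - χ_x/z) / ∏_{x ∈ R(λ)} (1 - q1 q2 χ_x / z) as rational functions of z, where A(λ) is the set of addable boxes of λ and R(λ) is the set of removable boxes of λ. -/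
open Finset

private lemma myDivHelper (p n d w1 w2 r : ℂ) (hd : d ≠ 0) (h : p * n * w1 * w2 = r * d) :
    p * (n / d) * w1 * w2 = r := by
  field_simp
  linear_combination h

private lemma rowProd (q1 q2 c : ℂ) (L : ℕ)
    (h1 : ∀ j, 1 ≤ j → j ≤ L → 1 - c * q2 ^ (j - 1) ≠ 0)
    (h2 : ∀ j, 1 ≤ j → j ≤ L → 1 - q1 * c * q2 ^ j ≠ 0) :
    ∀ m, m ≤ L →
      (∏ j ∈ Icc 1 m, ((1 - q1 * (c * q2 ^ (j - 1))) * (1 - q2 * (c * q2 ^ (j - 1)))) /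
          ((1 - c * q2 ^ (j - 1)) * (1 - q1 * q2 * (c * q2 ^ (j - 1)))))
        * ((1 - c) * (1 - q1 * c * q2 ^ m))
      = (1 - q1 * c) * (1 - c * q2 ^ m) := by
  intro m
  induction m with
  | zero => intro _; simp; ring
  | succ m ih =>
    intro hm
    have ihm := ih (Nat.le_of_succ_le hm)
    have hd1 : 1 - c * q2 ^ m ≠ 0 := by
      have := h1 (m + 1) (by omega) hm
      simpa using this
    have hd2 : 1 - q1 * q2 * (c * q2 ^ m) ≠ 0 := by
      have := h2 (m + 1) (by omega) hm
      intro h; apply this; rw [← h]; ring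
    rw [Finset.prod_Icc_succ_top (by omega : 1 ≤ m + 1)]
    simp only [Nat.add_sub_cancel]
    rw [← mul_assoc]
    exact myDivHelper _ _ _ _ _ _ (mul_ne_zero hd1 hd2)
      (by linear_combination ((1 - q2 * (c * q2 ^ m)) * (1 - q1 * q2 * (c * q2 ^ m))) * ihm)

private lemma myTele (P A B C : ℕ → ℂ) :
    ∀ M : ℕ, (∀ i, 1 ≤ i → i ≤ M → P i * (C i * B i) = C (i + 1) * A i) →
      C 1 * ((∏ i ∈ Icc 1 M, P i) * ∏ i ∈ Icc 1 M, B i)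
        = C (M + 1) * ∏ i ∈ Icc 1 M, A i := by
  intro M
  induction M with
  | zero => intro _; simp
  | succ M ih =>
    intro hP
    have ihm := ih (fun i h1 h2 => hP i h1 (by omega))
    have h := hP (M + 1) (by omega) le_rfl
    rw [Finset.prod_Icc_succ_top (by omega : 1 ≤ M + 1),
        Finset.prod_Icc_succ_top (by omega : 1 ≤ M + 1),
        Finset.prod_Icc_succ_top (by omega : 1 ≤ M + 1)]
    linear_combination (P (M + 1) * B (M + 1)) * ihm + (∏ i ∈ Icc 1 M, A i) * h


/-- Let `q1, q2, u` be generic nonzero complex numbers and `λ` a partition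
(antitone `lam : ℕ → ℕ`, 1-indexed, vanishing beyond `N`).  With box contents
`χ_{(i,j)} = u q1^{i-1} q2^{j-1}` and `S(w) = (1-q1 w)(1-q2 w)/((1-w)(1-q1 q2 w))`, the
function `Y_λ(z,u) = (1 - u/z) ∏_{x∈λ} S(χ_x/z)` equals
`∏_{x∈A(λ)} (1 - χ_x/z) / ∏_{x∈R(λ)} (1 - q1 q2 χ_x/z)`, where the addable boxes are
`(i, λ_i + 1)` for rows `i` with `i = 1` or `λ_i < λ_{i-1}`, and the removable boxes are
`(i, λ_i)` for rows `i` with `λ_{i+1} < λ_i`.  The identity holds at every `z` where no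
denominator vanishes. -/
theorem stmt14 (q1 q2 u z : ℂ)
    (hq1 : q1 ≠ 0) (hq2 : q2 ≠ 0) (hu : u ≠ 0) (hz : z ≠ 0)
    (N : ℕ) (lam : ℕ → ℕ)
    (hmono : ∀ i j : ℕ, i ≤ j → lam j ≤ lam i)
    (hbound : ∀ i : ℕ, N < i → lam i = 0)
    (χ : ℕ → ℕ → ℂ)
    (hχ : ∀ i j : ℕ, χ i j = u * q1 ^ (i - 1) * q2 ^ (j - 1))
    (S : ℂ → ℂ)
    (hS : ∀ w : ℂ, S w = ((1 - q1 * w) * (1 - q2 * w)) / ((1 - w) * (1 - q1 * q2 * w)))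
    (hden : ∀ i j : ℕ, 1 ≤ i → 1 ≤ j → j ≤ lam i →
      1 - χ i j / z ≠ 0 ∧ 1 - q1 * q2 * χ i j / z ≠ 0) :
    (1 - u / z) * ∏ i ∈ Finset.Icc 1 N, ∏ j ∈ Finset.Icc 1 (lam i), S (χ i j / z)
      = (∏ i ∈ (Finset.Icc 1 (N + 1)).filter (fun i => i = 1 ∨ lam i < lam (i - 1)),
            (1 - χ i (lam i + 1) / z))
        / (∏ i ∈ (Finset.Icc 1 N).filter (fun i => lam (i + 1) < lam i),
            (1 - q1 * q2 * χ i (lam i) / z)) := by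
  classical
  set M := Nat.findGreatest (fun i => 1 ≤ lam i) N with hM
  have hMN : M ≤ N := Nat.findGreatest_le N
  have hpos : ∀ i, 1 ≤ i → i ≤ M → 1 ≤ lam i := by
    intro i h1 h2
    have hM0 : M ≠ 0 := by omega
    have hM1 : 1 ≤ lam M :=
      Nat.findGreatest_of_ne_zero (P := fun i => 1 ≤ lam i) hM.symm hM0
    exact le_trans hM1 (hmono i M h2)
  have hzero : ∀ i, M < i → lam i = 0 := by
    intro i hi
    by_cases hiN : i ≤ N
    · by_contra h
      exact (Nat.findGreatest_is_greatest hi hiN) (by omega)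
    · exact hbound i (by omega)
  -- abbreviations
  set Af : ℕ → ℂ := fun i => 1 - u * q1 ^ (i - 1) * q2 ^ (lam i) / z with hAf
  set Bf : ℕ → ℂ := fun i => 1 - u * q1 ^ i * q2 ^ (lam i) / z with hBf
  set Cf : ℕ → ℂ := fun i => 1 - u * q1 ^ (i - 1) / z with hCf
  set Pf : ℕ → ℂ := fun i => ∏ j ∈ Icc 1 (lam i), S (χ i j / z) with hPf
  -- Step A : reduce LHS product from N to M
  have hstepA : (∏ i ∈ Icc 1 N, Pf i) = ∏ i ∈ Icc 1 M, Pf i := by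
    refine (Finset.prod_subset (Finset.Icc_subset_Icc_right hMN) ?_).symm
    intro x hx hxs
    simp only [mem_Icc] at hx hxs
    have : lam x = 0 := hzero x (by omega)
    simp [hPf, this]
  -- Step B : filter-set equalities
  have hAddSet : (Icc 1 (N + 1)).filter (fun i => i = 1 ∨ lam i < lam (i - 1))
      = (Icc 1 (M + 1)).filter (fun i => i = 1 ∨ lam i < lam (i - 1)) := by
    ext i
    simp only [mem_filter, mem_Icc]
    constructor
    · rintro ⟨⟨h1, h2⟩, h3⟩
      refine ⟨⟨h1, ?_⟩, h3⟩
      by_contra hc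
      rcases h3 with h3 | h3
      · omega
      · have e1 : lam i = 0 := hzero i (by omega)
        have e2 : lam (i - 1) = 0 := hzero (i - 1) (by omega)
        omega
    · rintro ⟨⟨h1, h2⟩, h3⟩
      exact ⟨⟨h1, by omega⟩, h3⟩
  have hRemSet : (Icc 1 N).filter (fun i => lam (i + 1) < lam i)
      = (Icc 1 M).filter (fun i => lam (i + 1) < lam i) := by
    ext i
    simp only [mem_filter, mem_Icc]
    constructor
    · rintro ⟨⟨h1, h2⟩, h3⟩
      refine ⟨⟨h1, ?_⟩, h3⟩
      by_contra hc
      have e1 : lam i = 0 := hzero i (by omega)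
      have e2 : lam (i + 1) = 0 := hzero (i + 1) (by omega)
      omega
    · rintro ⟨⟨h1, h2⟩, h3⟩
      exact ⟨⟨h1, by omega⟩, h3⟩
  -- Step C : row identity
  have hrow : ∀ i, 1 ≤ i → i ≤ M → Pf i * (Cf i * Bf i) = Cf (i + 1) * Af i := by
    intro i h1 h2
    have hLi : 1 ≤ lam i := hpos i h1 h2
    have hterm : ∀ j : ℕ, χ i j / z = u * q1 ^ (i - 1) / z * q2 ^ (j - 1) := by
      intro j; rw [hχ]; ring
    have hh1 : ∀ j, 1 ≤ j → j ≤ lam i → 1 - u * q1 ^ (i - 1) / z * q2 ^ (j - 1) ≠ 0 := by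
      intro j hj1 hj2
      have := (hden i j h1 hj1 hj2).1
      rw [hterm j] at this
      exact this
    have hh2 : ∀ j, 1 ≤ j → j ≤ lam i → 1 - q1 * (u * q1 ^ (i - 1) / z) * q2 ^ j ≠ 0 := by
      intro j hj1 hj2
      have := (hden i j h1 hj1 hj2).2
      rw [hχ] at this
      intro h; apply this
      rw [← h]
      have : q2 ^ j = q2 ^ (j - 1) * q2 := by
        rw [← pow_succ]; congr 1; omega
      rw [this]; ring
    have key := rowProd q1 q2 (u * q1 ^ (i - 1) / z) (lam i) hh1 hh2 (lam i) le_rfl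
    have hPeq : Pf i = ∏ j ∈ Icc 1 (lam i),
        ((1 - q1 * (u * q1 ^ (i - 1) / z * q2 ^ (j - 1)))
          * (1 - q2 * (u * q1 ^ (i - 1) / z * q2 ^ (j - 1)))) /
        ((1 - u * q1 ^ (i - 1) / z * q2 ^ (j - 1))
          * (1 - q1 * q2 * (u * q1 ^ (i - 1) / z * q2 ^ (j - 1)))) := by
      refine Finset.prod_congr rfl fun j _ => ?_
      rw [hterm j, hS]
    have hq1i : q1 ^ i = q1 ^ (i - 1) * q1 := by
      rw [← pow_succ]; congr 1; omega
    have hi1 : (i + 1) - 1 = i := by omega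
    simp only [hAf, hBf, hCf, hi1]
    rw [hPeq, hq1i]
    linear_combination key
  -- Step D : telescoping
  have tele := myTele Pf Af Bf Cf M hrow
  -- Step E : nonvanishing
  have hBne : ∀ i ∈ Icc 1 M, Bf i ≠ 0 := by
    intro i hi
    simp only [mem_Icc] at hi
    have hLi : 1 ≤ lam i := hpos i hi.1 hi.2
    have := (hden i (lam i) hi.1 hLi le_rfl).2
    rw [hχ] at this
    simp only [hBf]
    intro h; apply this
    rw [← h]
    have e1 : q1 ^ i = q1 ^ (i - 1) * q1 := by rw [← pow_succ]; congr 1; omega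
    have e2 : q2 ^ (lam i) = q2 ^ (lam i - 1) * q2 := by rw [← pow_succ]; congr 1; omega
    rw [e1, e2]; ring
  have hBprod : (∏ i ∈ Icc 1 M, Bf i) ≠ 0 := Finset.prod_ne_zero_iff.2 hBne
  -- Step F : LHS value
  have hC1 : Cf 1 = 1 - u / z := by simp [hCf]
  have hLHS : (1 - u / z) * ∏ i ∈ Icc 1 N, Pf i
      = (Cf (M + 1) * ∏ i ∈ Icc 1 M, Af i) / ∏ i ∈ Icc 1 M, Bf i := by
    rw [hstepA, eq_div_iff hBprod, ← hC1, mul_assoc]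
    exact tele
  -- Step G : Cf (M+1) = Af (M+1) and absorb into the product
  have hCA : Cf (M + 1) = Af (M + 1) := by
    have : lam (M + 1) = 0 := hzero (M + 1) (by omega)
    simp [hCf, hAf, this]
  have hAbsorb : Cf (M + 1) * ∏ i ∈ Icc 1 M, Af i = ∏ i ∈ Icc 1 (M + 1), Af i := by
    rw [Finset.prod_Icc_succ_top (by omega : 1 ≤ M + 1), hCA, mul_comm]
  -- Step H : congruence of RHS factor forms
  have hAddProd : (∏ i ∈ (Icc 1 (M + 1)).filter (fun i => i = 1 ∨ lam i < lam (i - 1)),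
      (1 - χ i (lam i + 1) / z))
      = ∏ i ∈ (Icc 1 (M + 1)).filter (fun i => i = 1 ∨ lam i < lam (i - 1)), Af i := by
    refine Finset.prod_congr rfl fun i hi => ?_
    rw [hχ]
    simp [hAf]
  have hRemProd : (∏ i ∈ (Icc 1 M).filter (fun i => lam (i + 1) < lam i),
      (1 - q1 * q2 * χ i (lam i) / z))
      = ∏ i ∈ (Icc 1 M).filter (fun i => lam (i + 1) < lam i), Bf i := by
    refine Finset.prod_congr rfl fun i hi => ?_
    simp only [mem_filter, mem_Icc] at hi
    have hLi : 1 ≤ lam i := by omega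
    rw [hχ]
    simp only [hBf]
    have e1 : q1 ^ i = q1 ^ (i - 1) * q1 := by rw [← pow_succ]; congr 1; omega
    have e2 : q2 ^ (lam i) = q2 ^ (lam i - 1) * q2 := by rw [← pow_succ]; congr 1; omega
    rw [e1, e2]; ring
  -- Step I : complement products agree
  have hcompl : (∏ i ∈ (Icc 1 (M + 1)).filter (fun i => ¬(i = 1 ∨ lam i < lam (i - 1))), Af i)
      = ∏ i ∈ (Icc 1 M).filter (fun i => ¬(lam (i + 1) < lam i)), Bf i := by
    refine Finset.prod_nbij' (fun a => a - 1) (fun a => a + 1) ?_ ?_ ?_ ?_ ?_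
    · intro a ha
      simp only [mem_filter, mem_Icc] at ha ⊢
      push_neg at ha
      obtain ⟨⟨h1, h2⟩, h3, h4⟩ := ha
      refine ⟨⟨by omega, by omega⟩, ?_⟩
      have : a - 1 + 1 = a := by omega
      rw [this]
      omega
    · intro a ha
      simp only [mem_filter, mem_Icc] at ha ⊢
      push_neg at ha ⊢
      obtain ⟨⟨h1, h2⟩, h3⟩ := ha
      refine ⟨⟨by omega, by omega⟩, by omega, ?_⟩
      simpa using h3
    · intro a ha
      simp only [mem_filter, mem_Icc] at ha
      push_neg at ha
      show a - 1 + 1 = a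
      omega
    · intro a ha
      show a + 1 - 1 = a
      omega
    · intro a ha
      simp only [mem_filter, mem_Icc] at ha
      push_neg at ha
      obtain ⟨⟨h1, h2⟩, h3, h4⟩ := ha
      have hle : lam a ≤ lam (a - 1) := hmono (a - 1) a (by omega)
      have heq : lam a = lam (a - 1) := by omega
      simp only [hAf, hBf]
      rw [heq]
  -- Step J : nonvanishing of complement product
  have hcomplne : (∏ i ∈ (Icc 1 M).filter (fun i => ¬(lam (i + 1) < lam i)), Bf i) ≠ 0 :=
    Finset.prod_ne_zero_iff.2 fun i hi => hBne i (Finset.mem_of_mem_filter i hi)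
  -- Assemble
  calc (1 - u / z) * ∏ i ∈ Icc 1 N, Pf i
      = (Cf (M + 1) * ∏ i ∈ Icc 1 M, Af i) / ∏ i ∈ Icc 1 M, Bf i := hLHS
    _ = (∏ i ∈ Icc 1 (M + 1), Af i) / ∏ i ∈ Icc 1 M, Bf i := by rw [hAbsorb]
    _ = ((∏ i ∈ (Icc 1 (M + 1)).filter (fun i => i = 1 ∨ lam i < lam (i - 1)), Af i)
          * ∏ i ∈ (Icc 1 (M + 1)).filter (fun i => ¬(i = 1 ∨ lam i < lam (i - 1))), Af i)
        / ((∏ i ∈ (Icc 1 M).filter (fun i => lam (i + 1) < lam i), Bf i)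
          * ∏ i ∈ (Icc 1 M).filter (fun i => ¬(lam (i + 1) < lam i)), Bf i) := by
        rw [Finset.prod_filter_mul_prod_filter_not, Finset.prod_filter_mul_prod_filter_not]
    _ = (∏ i ∈ (Icc 1 (M + 1)).filter (fun i => i = 1 ∨ lam i < lam (i - 1)), Af i)
        / ∏ i ∈ (Icc 1 M).filter (fun i => lam (i + 1) < lam i), Bf i := by
        rw [hcompl]
        exact mul_div_mul_right _ _ hcomplne
    _ = (∏ i ∈ (Finset.Icc 1 (N + 1)).filter (fun i => i = 1 ∨ lam i < lam (i - 1)),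
            (1 - χ i (lam i + 1) / z))
        / (∏ i ∈ (Finset.Icc 1 N).filter (fun i => lam (i + 1) < lam i),
            (1 - q1 * q2 * χ i (lam i) / z)) := by
        rw [hAddSet, hRemSet, hAddProd, hRemProd]
end

section
/- Let q1, q2, u1, u2 ∈ ℂ^× be generic and λ, ν partitions. Define the Nekrasov factor N_{λν}(Q; q1, q2) = ∏_{(i,j)∈λ} (1 - Q q2^{-ν_i + j} q1^{λ^t_j - i + 1}) · ∏_{(i,j)∈ν} (1 - Q q2^{λ_i - j + 1} q1^{-ν^t_j + i}), and the box contents χ^λ_{(i,j)} = u1 q1^{i-1} q2^{j-1} for (i,j) ∈ λ and χ^ν_{(i,j)} = u2 q1^{i-1} q2^{j-1} for (i,j) ∈ ν. Then N_{λν}(u1/u2; q1, q2) = ∏_{x∈λ, y∈ν} S(χ^λ_x / χ^ν_y) · ∏_{x∈λ} (1 - q1 q2 χ^λ_x / u2) · ∏_{y∈ν} (1 - u1/χ^ν_y), where S(z) = (1-q1 z)(1-q2 z)/((1-z)(1-q1 q2 z)). -/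
/-- The transpose of a partition `lam` (1-indexed, supported on `[1,N]`):
`λᵗ_j = #{i : 1 ≤ i ≤ N, λ_i ≥ j}`. -/
def transposeFn (N : ℕ) (lam : ℕ → ℕ) : ℕ → ℕ := fun j =>
  ((Finset.Icc 1 N).filter fun i => j ≤ lam i).card

/-- The Nekrasov factor
`N_{λν}(Q;q1,q2) = ∏_{(i,j)∈λ} (1 - Q q2^{-ν_i+j} q1^{λᵗ_j-i+1})
                 · ∏_{(i,j)∈ν} (1 - Q q2^{λ_i-j+1} q1^{-νᵗ_j+i})`,
for partitions `lam`, `nu` supported on `[1,Nl]`, `[1,Nn]` respectively. -/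
noncomputable def nek (Q q1 q2 : ℂ) (Nl Nn : ℕ) (lam nu : ℕ → ℕ) : ℂ :=
  (∏ i ∈ Finset.Icc 1 Nl, ∏ j ∈ Finset.Icc 1 (lam i),
      (1 - Q * q2 ^ ((j : ℤ) - (nu i : ℤ))
             * q1 ^ ((transposeFn Nl lam j : ℤ) - (i : ℤ) + 1)))
  * (∏ i ∈ Finset.Icc 1 Nn, ∏ j ∈ Finset.Icc 1 (nu i),
      (1 - Q * q2 ^ ((lam i : ℤ) - (j : ℤ) + 1)
             * q1 ^ ((i : ℤ) - (transposeFn Nn nu j : ℤ))))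


/-!
Both sides are products of factors `1 - (u1/u2) q1^a q2^b`, so it suffices to compare the
multisets of exponents `(a, b)`, i.e. to prove an identity in the Laurent polynomial ring
`ℤ[ℤ × ℤ] = ℤ[x^±1, y^±1]`, where `x` and `y` record the powers of `q1` and `q2`. With
`V = ∑_{(i,j) ∈ λ} x^(i-1) y^(j-1)` and `V' = ∑_{(k,l) ∈ ν} x^(1-k) y^(1-l)`, the exponents of the
Nekrasov factor have character `x y V + V' - (1 - x)(1 - y) V V'`.

This is proved box by box. Read along the columns of `λ`, the `λ`-half of the character
telescopes into contributions `y^c (C_r - C_(r-1))` of the boxes `(r, c)` of `λ`, where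
`C = nekColumn`; read along the rows, the `ν`-half is `V'` (after turning the columns of `ν`
upside down) plus contributions `(y - 1) y^c R_r` of the same boxes, where `R = nekRow`.
The total contribution of a box is `x^r y^c - (1 - x)(1 - y) x^(r-1) y^(c-1) V'`: when `r` grows
by one, both sides get multiplied by `x`, and once row `r` of `ν` is empty the identity reduces
to a geometric sum.
-/

open Finset AddMonoidAlgebra

namespace Nekrasov

variable {N M : ℕ} {lam nu : ℕ → ℕ}

section Partition

lemma transposeFn_le (N : ℕ) (lam : ℕ → ℕ) (j : ℕ) : transposeFn N lam j ≤ N :=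
  (card_filter_le _ _).trans (by simp)

lemma le_transposeFn_iff (hlam : Antitone lam) (hN : ∀ i, N < i → lam i = 0) {i j : ℕ}
    (hi : 1 ≤ i) (hj : 1 ≤ j) : j ≤ lam i ↔ i ≤ transposeFn N lam j := by
  constructor
  · intro h
    have hiN : i ≤ N := by
      by_contra h'
      have := hN i (by omega)
      omega
    calc i = #(Icc 1 i) := by simp
      _ ≤ transposeFn N lam j := card_le_card fun k hk => by
        simp only [mem_Icc, mem_filter] at hk ⊢
        exact ⟨⟨hk.1, hk.2.trans hiN⟩, h.trans (hlam hk.2)⟩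
  · intro h
    by_contra h'
    have : transposeFn N lam j ≤ #(Icc 1 (i - 1)) := card_le_card fun k hk => by
      simp only [mem_Icc, mem_filter] at hk ⊢
      refine ⟨hk.1.1, ?_⟩
      by_contra hki
      exact h' (hk.2.trans (hlam (by omega)))
    simp only [Nat.card_Icc] at this
    omega

lemma transposeFn_eq_of_lt_of_le (hlam : Antitone lam) (hN : ∀ i, N < i → lam i = 0) {r l : ℕ}
    (hr : 1 ≤ r) (hl : lam (r + 1) < l) (hlr : l ≤ lam r) : transposeFn N lam l = r := by
  have h1 := (le_transposeFn_iff hlam hN hr (by omega)).1 hlr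
  have h2 := (le_transposeFn_iff (i := r + 1) (j := l) hlam hN (by omega) (by omega)).not.1
    (by omega)
  omega

lemma sum_boxes_comm {A : Type*} [AddCommMonoid A] (hlam : Antitone lam)
    (hN : ∀ i, N < i → lam i = 0) (f : ℕ → ℕ → A) :
    ∑ i ∈ Icc 1 N, ∑ j ∈ Icc 1 (lam i), f i j
      = ∑ j ∈ Icc 1 (lam 1), ∑ i ∈ Icc 1 (transposeFn N lam j), f i j := by
  refine sum_comm' fun i j => ?_
  simp only [mem_Icc]
  constructor
  · rintro ⟨⟨hi, -⟩, hj, hji⟩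
    exact ⟨⟨hi, (le_transposeFn_iff hlam hN hi hj).1 hji⟩, hj, hji.trans (hlam hi)⟩
  · rintro ⟨⟨hi, hij⟩, hj, -⟩
    exact ⟨⟨hi, hij.trans (transposeFn_le N lam j)⟩, hj, (le_transposeFn_iff hlam hN hi hj).2 hij⟩

lemma sum_boxes_reflect {A : Type*} [AddCommMonoid A] (hlam : Antitone lam)
    (hN : ∀ i, N < i → lam i = 0) (f : ℤ → ℕ → A) :
    ∑ i ∈ Icc 1 N, ∑ j ∈ Icc 1 (lam i), f ((i : ℤ) - transposeFn N lam j) j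
      = ∑ i ∈ Icc 1 N, ∑ j ∈ Icc 1 (lam i), f (1 - (i : ℤ)) j := by
  rw [sum_boxes_comm hlam hN, sum_boxes_comm hlam hN]
  refine sum_congr rfl fun j _ => ?_
  set h := transposeFn N lam j
  refine sum_nbij' (fun i => h + 1 - i) (fun i => h + 1 - i) ?_ ?_ ?_ ?_ ?_ <;>
    intro i hi <;> simp only [mem_Icc] at hi ⊢
  iterate 4 omega
  congr 1
  push_cast [Nat.cast_sub (by omega : i ≤ h + 1)]
  ring

end Partition

section Telescope

variable {G : Type*} [AddCommGroup G]

lemma sum_Icc_sub_pred (f : ℕ → G) (n : ℕ) :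
    ∑ i ∈ Icc 1 n, (f i - f (i - 1)) = f n - f 0 := by
  induction n with
  | zero => simp
  | succ n ih => rw [sum_Icc_succ_top (by omega), ih, Nat.add_sub_cancel]; abel

lemma sum_Icc_sub_pred_int (f : ℤ → G) (n : ℕ) :
    ∑ i ∈ Icc 1 n, (f i - f (i - 1)) = f n - f 0 := by
  have h := sum_Icc_sub_pred (f ∘ Nat.cast) n
  simp only [Function.comp_apply, Nat.cast_zero] at h
  rw [← h]
  refine sum_congr rfl fun i hi => ?_
  rw [Nat.cast_sub (mem_Icc.1 hi).1, Nat.cast_one]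

end Telescope

lemma eq_zero_of_succ_eq_unit_mul {R : Type*} [CommRing R] {E : ℕ → R} {u : R} (hu : IsUnit u)
    {a m : ℕ} (hstep : ∀ r, a ≤ r → E (r + 1) = u * E r) (ham : a ≤ m) (hm : E m = 0)
    {r : ℕ} (hr : a ≤ r) : E r = 0 := by
  have hpow : ∀ r, a ≤ r → ∀ n, E (r + n) = u ^ n * E r := by
    intro r hr n
    induction n with
    | zero => simp
    | succ n ih => rw [← add_assoc, hstep _ (by omega), ih, pow_succ']; ring
  rcases le_total r m with h | h
  · rw [← Nat.add_sub_cancel' h, hpow r hr] at hm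
    exact (hu.pow _).mul_right_eq_zero.1 hm
  · rw [← Nat.add_sub_cancel' h, hpow m ham, hm, mul_zero]

section Laurent

noncomputable def mono (a b : ℤ) : ℤ[ℤ × ℤ] := single (a, b) 1

lemma mono_mul_mono (a b c d : ℤ) : mono a b * mono c d = mono (a + c) (b + d) := by
  simp [mono, single_mul_single]

lemma mono_zero_zero : mono 0 0 = 1 := rfl

lemma mono_one_zero_mul_mono_zero_one : mono 1 0 * mono 0 1 = mono 1 1 := by
  rw [mono_mul_mono, add_zero, zero_add]

lemma isUnit_mono (a b : ℤ) : IsUnit (mono a b) :=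
  .of_mul_eq_one (mono (-a) (-b)) <| by
    rw [mono_mul_mono, add_neg_cancel, add_neg_cancel, mono_zero_zero]

lemma mono_zero_one_sub_one_mul_sum_neg (a : ℤ) (n : ℕ) :
    (mono 0 1 - 1) * ∑ l ∈ Icc 1 n, mono a (-l) = mono a 0 - mono a (-n) := by
  calc _ = ∑ l ∈ Icc 1 n, (-mono a (-l) - -mono a (-((l : ℤ) - 1))) := by
        rw [mul_sum]
        refine sum_congr rfl fun l _ => ?_
        rw [sub_mul, one_mul, mono_mul_mono]
        ring_nf
    _ = _ := by rw [sum_Icc_sub_pred_int (fun l : ℤ => -mono a (-l)), neg_zero]; abel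

lemma mono_zero_one_sub_one_mul_sum_sub (a b : ℤ) (n : ℕ) :
    (mono 0 1 - 1) * ∑ j ∈ Icc 1 n, mono a (j - b) = mono a (n - b + 1) - mono a (1 - b) := by
  calc _ = ∑ j ∈ Icc 1 n, (mono a (j - b + 1) - mono a ((j : ℤ) - 1 - b + 1)) := by
        rw [mul_sum]
        refine sum_congr rfl fun j _ => ?_
        rw [sub_mul, one_mul, mono_mul_mono]
        ring_nf
    _ = _ := by
      rw [sum_Icc_sub_pred_int (fun j : ℤ => mono a (j - b + 1)), zero_sub, neg_add_eq_sub]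

lemma mono_one_zero_sub_one_mul_sum (n : ℕ) :
    (mono 1 0 - 1) * ∑ k ∈ Icc 1 n, mono ((n : ℤ) - k + 1) 0 = mono (n + 1) 0 - mono 1 0 := by
  calc _ = ∑ k ∈ Icc 1 n, (-mono ((n : ℤ) - k + 1) 0 - -mono (n - ((k : ℤ) - 1) + 1) 0) := by
        rw [mul_sum]
        refine sum_congr rfl fun k _ => ?_
        rw [sub_mul, one_mul, mono_mul_mono]
        ring_nf
    _ = _ := by
      rw [sum_Icc_sub_pred_int (fun k : ℤ => -mono (n - k + 1) 0), sub_self, zero_add,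
        sub_zero]
      abel

noncomputable def diagramChar (N : ℕ) (lam : ℕ → ℕ) : ℤ[ℤ × ℤ] :=
  ∑ i ∈ Icc 1 N, ∑ j ∈ Icc 1 (lam i), mono (i - 1) (j - 1)

noncomputable def dualDiagramChar (N : ℕ) (lam : ℕ → ℕ) : ℤ[ℤ × ℤ] :=
  ∑ i ∈ Icc 1 N, ∑ j ∈ Icc 1 (lam i), mono (1 - i) (1 - j)

noncomputable def nekColumn (nu : ℕ → ℕ) (r : ℕ) : ℤ[ℤ × ℤ] :=
  ∑ i ∈ Icc 1 r, mono ((r : ℤ) - i + 1) (-nu i)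

noncomputable def nekRow (M : ℕ) (nu : ℕ → ℕ) (r : ℕ) : ℤ[ℤ × ℤ] :=
  ∑ l ∈ Icc 1 (nu r), mono ((r : ℤ) - transposeFn M nu l) (-l)

lemma nekColumn_zero (nu : ℕ → ℕ) : nekColumn nu 0 = 0 := by simp [nekColumn]

lemma nekColumn_succ (nu : ℕ → ℕ) (r : ℕ) :
    nekColumn nu (r + 1) = mono 1 0 * nekColumn nu r + mono 1 (-nu (r + 1)) := by
  rw [nekColumn, sum_Icc_succ_top (by omega), nekColumn, mul_sum]
  congr 1
  · refine sum_congr rfl fun i _ => ?_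
    rw [mono_mul_mono]
    push_cast
    ring_nf
  · push_cast
    ring_nf

lemma nekRow_succ (hnu : Antitone nu) (hM : ∀ i, M < i → nu i = 0) {r : ℕ} (hr : 1 ≤ r) :
    (mono 0 1 - 1) * nekRow M nu (r + 1)
      = mono 1 0 * ((mono 0 1 - 1) * nekRow M nu r) - (mono 1 (-nu (r + 1)) - mono 1 (-nu r)) := by
  have hsub : Icc 1 (nu (r + 1)) ⊆ Icc 1 (nu r) := Icc_subset_Icc_right (hnu (by omega))
  have hshift : mono 1 0 * nekRow M nu r
      = ∑ l ∈ Icc 1 (nu r), mono (((r + 1 : ℕ) : ℤ) - transposeFn M nu l) (-l) := by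
    rw [nekRow, mul_sum]
    refine sum_congr rfl fun l _ => ?_
    rw [mono_mul_mono]
    push_cast
    ring_nf
  have hend : ∑ l ∈ Icc 1 (nu r) \ Icc 1 (nu (r + 1)),
        mono (((r + 1 : ℕ) : ℤ) - transposeFn M nu l) (-l)
      = ∑ l ∈ Icc 1 (nu r) \ Icc 1 (nu (r + 1)), mono 1 (-l) := by
    refine sum_congr rfl fun l hl => ?_
    simp only [mem_sdiff, mem_Icc, not_and, not_le] at hl
    rw [transposeFn_eq_of_lt_of_le hnu hM hr (hl.2 hl.1.1) hl.1.2]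
    push_cast
    ring_nf
  rw [← sum_sdiff hsub, hend] at hshift
  have hgeom := congrArg ((mono 0 1 - 1) * ·) (sum_sdiff hsub (f := fun l : ℕ => mono 1 (-l)))
  simp only [mul_add, mono_zero_one_sub_one_mul_sum_neg] at hgeom
  rw [nekRow]
  linear_combination -(mono 0 1 - 1) * hshift - hgeom

lemma one_sub_mul_dualDiagramChar (r : ℤ) (M : ℕ) (nu : ℕ → ℕ) :
    (1 - mono 0 1) * (mono r (-1) * dualDiagramChar M nu)
      = ∑ k ∈ Icc 1 M, (mono (r - k + 1) (-nu k) - mono (r - k + 1) 0) := by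
  rw [dualDiagramChar, mul_sum, mul_sum]
  refine sum_congr rfl fun k _ => ?_
  have hrow : mono r (-1) * ∑ l ∈ Icc 1 (nu k), mono (1 - (k : ℤ)) (1 - l)
      = ∑ l ∈ Icc 1 (nu k), mono (r - k + 1) (-l) := by
    rw [mul_sum]
    refine sum_congr rfl fun l _ => ?_
    rw [mono_mul_mono]
    ring_nf
  rw [hrow]
  linear_combination -mono_zero_one_sub_one_mul_sum_neg (r - k + 1) (nu k)

/-- The contribution of the box `(r, c)` of `λ`, divided by `y ^ c`. -/
lemma nekColumn_sub_add_nekRow (hnu : Antitone nu) (hM : ∀ i, M < i → nu i = 0) {r : ℕ}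
    (hr : 1 ≤ r) :
    nekColumn nu r - nekColumn nu (r - 1) + (mono 0 1 - 1) * nekRow M nu r
      = mono r 0
        - (1 - mono 1 0) * (1 - mono 0 1) * (mono ((r : ℤ) - 1) (-1) * dualDiagramChar M nu) := by
  refine sub_eq_zero.1 (eq_zero_of_succ_eq_unit_mul (isUnit_mono 1 0) (a := 1) (m := M + 1)
    (E := fun r => nekColumn nu r - nekColumn nu (r - 1) + (mono 0 1 - 1) * nekRow M nu r
      - (mono r 0
        - (1 - mono 1 0) * (1 - mono 0 1) * (mono ((r : ℤ) - 1) (-1) * dualDiagramChar M nu)))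
    ?_ (by omega) ?_ hr)
  · intro r hr
    have hcol := nekColumn_succ nu (r - 1)
    rw [Nat.sub_add_cancel hr] at hcol
    have hx : mono ((r + 1 : ℕ) : ℤ) 0 = mono 1 0 * mono r 0 := by
      rw [mono_mul_mono]; push_cast; ring_nf
    have hW : mono (((r + 1 : ℕ) : ℤ) - 1) (-1) = mono 1 0 * mono ((r : ℤ) - 1) (-1) := by
      rw [mono_mul_mono]; push_cast; ring_nf
    simp only [Nat.add_sub_cancel]
    rw [hx, hW]
    linear_combination nekColumn_succ nu r - hcol + nekRow_succ hnu hM hr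
  · have hrow : nekRow M nu (M + 1) = 0 := by simp [nekRow, hM (M + 1) (by omega)]
    have hcol := nekColumn_succ nu M
    rw [hM (M + 1) (by omega), Nat.cast_zero, neg_zero] at hcol
    have hdual := one_sub_mul_dualDiagramChar M M nu
    rw [sum_sub_distrib, ← nekColumn] at hdual
    simp only [Nat.add_sub_cancel, Nat.cast_add, Nat.cast_one, add_sub_cancel_right]
    linear_combination hcol + (mono 0 1 - 1) * hrow + (1 - mono 1 0) * hdual
      + mono_one_zero_sub_one_mul_sum M

lemma sum_boxes_lam_eq_sum_nekColumn (hlam : Antitone lam) (hN : ∀ i, N < i → lam i = 0)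
    (nu : ℕ → ℕ) :
    ∑ i ∈ Icc 1 N, ∑ j ∈ Icc 1 (lam i), mono ((transposeFn N lam j : ℤ) - i + 1) ((j : ℤ) - nu i)
      = ∑ i ∈ Icc 1 N, ∑ j ∈ Icc 1 (lam i),
          mono 0 j * (nekColumn nu i - nekColumn nu (i - 1)) := by
  rw [sum_boxes_comm hlam hN, sum_boxes_comm hlam hN]
  refine sum_congr rfl fun j _ => ?_
  rw [← mul_sum, sum_Icc_sub_pred (nekColumn nu), nekColumn_zero, sub_zero, nekColumn, mul_sum]
  refine sum_congr rfl fun i _ => ?_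
  rw [mono_mul_mono]
  ring_nf

lemma sum_boxes_nu_eq_dualDiagramChar_add (hN : ∀ i, N < i → lam i = 0) (hnu : Antitone nu)
    (hM : ∀ i, M < i → nu i = 0) :
    ∑ k ∈ Icc 1 M, ∑ l ∈ Icc 1 (nu k), mono ((k : ℤ) - transposeFn M nu l) ((lam k : ℤ) - l + 1)
      = dualDiagramChar M nu
        + (mono 0 1 - 1) * ∑ i ∈ Icc 1 N, ∑ j ∈ Icc 1 (lam i), mono 0 j * nekRow M nu i := by
  have hrow : ∀ k, ∑ l ∈ Icc 1 (nu k), mono ((k : ℤ) - transposeFn M nu l) ((lam k : ℤ) - l + 1)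
      = ∑ l ∈ Icc 1 (nu k), mono ((k : ℤ) - transposeFn M nu l) (1 - l)
        + (mono 0 1 - 1) * ∑ j ∈ Icc 1 (lam k), mono 0 j * nekRow M nu k := by
    intro k
    have hswap : ∑ j ∈ Icc 1 (lam k), mono 0 j * nekRow M nu k
        = ∑ l ∈ Icc 1 (nu k), ∑ j ∈ Icc 1 (lam k), mono ((k : ℤ) - transposeFn M nu l) (j - l) := by
      rw [sum_comm]
      refine sum_congr rfl fun j _ => ?_
      rw [nekRow, mul_sum]
      refine sum_congr rfl fun l _ => ?_
      rw [mono_mul_mono]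
      ring_nf
    rw [hswap, mul_sum, ← sum_add_distrib]
    refine sum_congr rfl fun l _ => ?_
    rw [mono_zero_one_sub_one_mul_sum_sub]
    abel
  rw [sum_congr rfl fun k _ => hrow k, sum_add_distrib, ← mul_sum,
    sum_boxes_reflect hnu hM (fun z l => mono z (1 - l)), ← dualDiagramChar]
  congr 2
  calc _ = ∑ i ∈ Icc 1 (N + M), ∑ j ∈ Icc 1 (lam i), mono 0 j * nekRow M nu i :=
        sum_subset (Icc_subset_Icc_right (by omega)) fun k hk hk' => by
          simp only [mem_Icc, not_and, not_le] at hk hk'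
          simp [nekRow, hM k (hk' hk.1)]
    _ = _ := (sum_subset (Icc_subset_Icc_right (by omega)) fun k hk hk' => by
          simp only [mem_Icc, not_and, not_le] at hk hk'
          simp [hN k (hk' hk.1)]).symm

lemma sum_boxes_mono_mul_eq (N : ℕ) (lam : ℕ → ℕ) (W : ℤ[ℤ × ℤ]) :
    ∑ i ∈ Icc 1 N, ∑ j ∈ Icc 1 (lam i),
        mono 0 j * (mono i 0 - (1 - mono 1 0) * (1 - mono 0 1) * (mono ((i : ℤ) - 1) (-1) * W))
      = mono 1 1 * diagramChar N lam - (1 - mono 1 0) * (1 - mono 0 1) * diagramChar N lam * W := by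
  rw [diagramChar, mul_sum, mul_sum, sum_mul, ← sum_sub_distrib]
  refine sum_congr rfl fun i _ => ?_
  rw [mul_sum, mul_sum, sum_mul, ← sum_sub_distrib]
  refine sum_congr rfl fun j _ => ?_
  have h1 : mono 0 j * mono i 0 = mono 1 1 * mono ((i : ℤ) - 1) ((j : ℤ) - 1) := by
    rw [mono_mul_mono, mono_mul_mono]; ring_nf
  have h2 : mono 0 j * mono ((i : ℤ) - 1) (-1) = mono ((i : ℤ) - 1) ((j : ℤ) - 1) := by
    rw [mono_mul_mono]; ring_nf
  linear_combination h1 - (1 - mono 1 0) * (1 - mono 0 1) * W * h2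

theorem sum_nek_mono_eq (hlam : Antitone lam) (hN : ∀ i, N < i → lam i = 0) (hnu : Antitone nu)
    (hM : ∀ i, M < i → nu i = 0) :
    ∑ i ∈ Icc 1 N, ∑ j ∈ Icc 1 (lam i), mono ((transposeFn N lam j : ℤ) - i + 1) ((j : ℤ) - nu i)
      + ∑ k ∈ Icc 1 M, ∑ l ∈ Icc 1 (nu k),
          mono ((k : ℤ) - transposeFn M nu l) ((lam k : ℤ) - l + 1)
      = mono 1 1 * diagramChar N lam + dualDiagramChar M nu
        - (1 - mono 1 0) * (1 - mono 0 1) * diagramChar N lam * dualDiagramChar M nu := by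
  have hboxes :
      ∑ i ∈ Icc 1 N, ∑ j ∈ Icc 1 (lam i), mono 0 j * (nekColumn nu i - nekColumn nu (i - 1))
        + (mono 0 1 - 1) * ∑ i ∈ Icc 1 N, ∑ j ∈ Icc 1 (lam i), mono 0 j * nekRow M nu i
      = ∑ i ∈ Icc 1 N, ∑ j ∈ Icc 1 (lam i), mono 0 j * (mono i 0 - (1 - mono 1 0)
          * (1 - mono 0 1) * (mono ((i : ℤ) - 1) (-1) * dualDiagramChar M nu)) := by
    rw [mul_sum, ← sum_add_distrib]
    refine sum_congr rfl fun i hi => ?_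
    rw [mul_sum, ← sum_add_distrib]
    refine sum_congr rfl fun j _ => ?_
    rw [← nekColumn_sub_add_nekRow hnu hM (mem_Icc.1 hi).1]
    ring
  rw [sum_boxes_lam_eq_sum_nekColumn hlam hN, sum_boxes_nu_eq_dualDiagramChar_add hN hnu hM]
  linear_combination hboxes + sum_boxes_mono_mul_eq N lam (dualDiagramChar M nu)

lemma sum_pairs_mono (N M : ℕ) (lam nu : ℕ → ℕ) (a b : ℤ) :
    ∑ i ∈ Icc 1 N, ∑ j ∈ Icc 1 (lam i), ∑ k ∈ Icc 1 M, ∑ l ∈ Icc 1 (nu k),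
        mono ((i : ℤ) - k + a) ((j : ℤ) - l + b)
      = mono a b * diagramChar N lam * dualDiagramChar M nu := by
  rw [diagramChar, mul_sum, sum_mul]
  refine sum_congr rfl fun i _ => ?_
  rw [mul_sum, sum_mul]
  refine sum_congr rfl fun j _ => ?_
  rw [dualDiagramChar, mul_sum]
  refine sum_congr rfl fun k _ => ?_
  rw [mul_sum]
  refine sum_congr rfl fun l _ => ?_
  rw [mono_mul_mono, mono_mul_mono]
  ring_nf

lemma sum_boxes_mono (N : ℕ) (lam : ℕ → ℕ) :
    ∑ i ∈ Icc 1 N, ∑ j ∈ Icc 1 (lam i), mono i j = mono 1 1 * diagramChar N lam := by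
  simp only [diagramChar, mul_sum]
  refine sum_congr rfl fun i _ => sum_congr rfl fun j _ => ?_
  rw [mono_mul_mono]
  ring_nf

end Laurent

section Exponents

noncomputable def toLaurent : Multiset (ℤ × ℤ) →+ ℤ[ℤ × ℤ] where
  toFun m := (m.map fun p => mono p.1 p.2).sum
  map_zero' := by simp
  map_add' := by simp

lemma toLaurent_apply (m : Multiset (ℤ × ℤ)) :
    toLaurent m = (m.map fun p => mono p.1 p.2).sum := rfl

lemma toLaurent_singleton (p : ℤ × ℤ) : toLaurent {p} = mono p.1 p.2 := by
  simp [toLaurent_apply]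

lemma coeff_toLaurent (m : Multiset (ℤ × ℤ)) (p : ℤ × ℤ) :
    (toLaurent m).coeff p = m.count p := by
  induction m using Multiset.induction_on with
  | empty => simp
  | cons a m ih =>
    rw [← Multiset.singleton_add, map_add, coeff_add, Finsupp.add_apply, ih, toLaurent_singleton,
      mono, coeff_single, Finsupp.single_apply, Multiset.count_add, Multiset.count_singleton]
    split_ifs <;> simp_all [eq_comm]

lemma toLaurent_injective : Function.Injective toLaurent := fun m m' h =>
  Multiset.ext.2 fun p => by simpa [coeff_toLaurent] using congrArg (·.coeff p) h

lemma prod_map_finset_sum {ι β α : Type*} [CommMonoid α] (φ : β → α) (s : Finset ι)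
    (f : ι → Multiset β) : ((∑ i ∈ s, f i).map φ).prod = ∏ i ∈ s, ((f i).map φ).prod := by
  rw [← Multiset.coe_mapAddMonoidHom, map_sum, Multiset.prod_sum]

theorem prod_nek_mul_prod_pairs_eq {α : Type*} [CommMonoid α] (φ : ℤ × ℤ → α)
    (hlam : Antitone lam) (hN : ∀ i, N < i → lam i = 0) (hnu : Antitone nu)
    (hM : ∀ i, M < i → nu i = 0) :
    (∏ i ∈ Icc 1 N, ∏ j ∈ Icc 1 (lam i), φ ((transposeFn N lam j : ℤ) - i + 1, (j : ℤ) - nu i))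
      * (∏ k ∈ Icc 1 M, ∏ l ∈ Icc 1 (nu k),
          φ ((k : ℤ) - transposeFn M nu l, (lam k : ℤ) - l + 1))
      * (∏ i ∈ Icc 1 N, ∏ j ∈ Icc 1 (lam i), ∏ k ∈ Icc 1 M, ∏ l ∈ Icc 1 (nu k),
          φ ((i : ℤ) - k, (j : ℤ) - l))
      * (∏ i ∈ Icc 1 N, ∏ j ∈ Icc 1 (lam i), ∏ k ∈ Icc 1 M, ∏ l ∈ Icc 1 (nu k),
          φ ((i : ℤ) - k + 1, (j : ℤ) - l + 1))
      = (∏ i ∈ Icc 1 N, ∏ j ∈ Icc 1 (lam i), ∏ k ∈ Icc 1 M, ∏ l ∈ Icc 1 (nu k),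
          φ ((i : ℤ) - k + 1, (j : ℤ) - l))
      * (∏ i ∈ Icc 1 N, ∏ j ∈ Icc 1 (lam i), ∏ k ∈ Icc 1 M, ∏ l ∈ Icc 1 (nu k),
          φ ((i : ℤ) - k, (j : ℤ) - l + 1))
      * (∏ i ∈ Icc 1 N, ∏ j ∈ Icc 1 (lam i), φ (i, j))
      * (∏ k ∈ Icc 1 M, ∏ l ∈ Icc 1 (nu k), φ (1 - k, 1 - l)) := by
  have key : (∑ i ∈ Icc 1 N, ∑ j ∈ Icc 1 (lam i),
        {((transposeFn N lam j : ℤ) - i + 1, (j : ℤ) - nu i)} : Multiset (ℤ × ℤ))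
      + (∑ k ∈ Icc 1 M, ∑ l ∈ Icc 1 (nu k), {((k : ℤ) - transposeFn M nu l, (lam k : ℤ) - l + 1)})
      + (∑ i ∈ Icc 1 N, ∑ j ∈ Icc 1 (lam i), ∑ k ∈ Icc 1 M, ∑ l ∈ Icc 1 (nu k),
          {((i : ℤ) - k + 0, (j : ℤ) - l + 0)})
      + (∑ i ∈ Icc 1 N, ∑ j ∈ Icc 1 (lam i), ∑ k ∈ Icc 1 M, ∑ l ∈ Icc 1 (nu k),
          {((i : ℤ) - k + 1, (j : ℤ) - l + 1)})
      = (∑ i ∈ Icc 1 N, ∑ j ∈ Icc 1 (lam i), ∑ k ∈ Icc 1 M, ∑ l ∈ Icc 1 (nu k),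
          {((i : ℤ) - k + 1, (j : ℤ) - l + 0)})
      + (∑ i ∈ Icc 1 N, ∑ j ∈ Icc 1 (lam i), ∑ k ∈ Icc 1 M, ∑ l ∈ Icc 1 (nu k),
          {((i : ℤ) - k + 0, (j : ℤ) - l + 1)})
      + (∑ i ∈ Icc 1 N, ∑ j ∈ Icc 1 (lam i), {((i : ℤ), (j : ℤ))})
      + (∑ k ∈ Icc 1 M, ∑ l ∈ Icc 1 (nu k), {(1 - (k : ℤ), 1 - (l : ℤ))}) := by
    apply toLaurent_injective
    simp only [map_add, map_sum, toLaurent_singleton, sum_pairs_mono, sum_boxes_mono,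
      mono_zero_zero]
    rw [← dualDiagramChar]
    linear_combination sum_nek_mono_eq hlam hN hnu hM
      - diagramChar N lam * dualDiagramChar M nu * mono_one_zero_mul_mono_zero_one
  simpa only [Multiset.map_add, Multiset.prod_add, prod_map_finset_sum, Multiset.map_singleton,
    Multiset.prod_singleton, add_zero] using congrArg (fun m => (m.map φ).prod) key

end Exponents

section Factors

variable {K : Type*} [Field K]

def nekFactor (t q1 q2 : K) (p : ℤ × ℤ) : K := 1 - t * q1 ^ p.1 * q2 ^ p.2

lemma nek_eq_prod_nekFactor (Q q1 q2 : ℂ) (N M : ℕ) (lam nu : ℕ → ℕ) :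
    nek Q q1 q2 N M lam nu
      = (∏ i ∈ Icc 1 N, ∏ j ∈ Icc 1 (lam i),
          nekFactor Q q1 q2 ((transposeFn N lam j : ℤ) - i + 1, (j : ℤ) - nu i))
        * ∏ k ∈ Icc 1 M, ∏ l ∈ Icc 1 (nu k),
            nekFactor Q q1 q2 ((k : ℤ) - transposeFn M nu l, (lam k : ℤ) - l + 1) := by
  unfold nek nekFactor
  congr 1 <;> exact prod_congr rfl fun _ _ => prod_congr rfl fun _ _ => by ring

variable {q1 q2 : K}

lemma one_sub_mul_mul_eq_nekFactor (hq1 : q1 ≠ 0) (hq2 : q2 ≠ 0) (t : K) (a b : ℤ) :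
    1 - q1 * q2 * (t * q1 ^ a * q2 ^ b) = nekFactor t q1 q2 (a + 1, b + 1) := by
  rw [nekFactor, zpow_add_one₀ hq1, zpow_add_one₀ hq2]
  ring

lemma S_eq_nekFactor (hq1 : q1 ≠ 0) (hq2 : q2 ≠ 0) (t : K) (a b : ℤ) :
    (1 - q1 * (t * q1 ^ a * q2 ^ b)) * (1 - q2 * (t * q1 ^ a * q2 ^ b))
        / ((1 - t * q1 ^ a * q2 ^ b) * (1 - q1 * q2 * (t * q1 ^ a * q2 ^ b)))
      = nekFactor t q1 q2 (a + 1, b) * nekFactor t q1 q2 (a, b + 1)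
        / (nekFactor t q1 q2 (a, b) * nekFactor t q1 q2 (a + 1, b + 1)) := by
  rw [one_sub_mul_mul_eq_nekFactor hq1 hq2]
  simp only [nekFactor, zpow_add_one₀ hq1, zpow_add_one₀ hq2]
  ring_nf

lemma pow_pred_div_pow_pred {q : K} (hq : q ≠ 0) {i k : ℕ} (hi : 1 ≤ i) (hk : 1 ≤ k) :
    q ^ (i - 1) / q ^ (k - 1) = q ^ ((i : ℤ) - k) := by
  rw [← zpow_natCast, ← zpow_natCast, ← zpow_sub₀ hq]
  congr 1
  omega

lemma content_div_content (hq1 : q1 ≠ 0) (hq2 : q2 ≠ 0) (u1 u2 : K) {i j k l : ℕ}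
    (hi : 1 ≤ i) (hj : 1 ≤ j) (hk : 1 ≤ k) (hl : 1 ≤ l) :
    u1 * q1 ^ (i - 1) * q2 ^ (j - 1) / (u2 * q1 ^ (k - 1) * q2 ^ (l - 1))
      = u1 / u2 * q1 ^ ((i : ℤ) - k) * q2 ^ ((j : ℤ) - l) := by
  rw [mul_div_mul_comm, mul_div_mul_comm, pow_pred_div_pow_pred hq1 hi hk,
    pow_pred_div_pow_pred hq2 hj hl]

lemma prod_S_content_eq (hq1 : q1 ≠ 0) (hq2 : q2 ≠ 0) {S : K → K}
    (hS : ∀ w, S w = ((1 - q1 * w) * (1 - q2 * w)) / ((1 - w) * (1 - q1 * q2 * w)))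
    (u1 u2 : K) (N M : ℕ) (lam nu : ℕ → ℕ) :
    ∏ i ∈ Icc 1 N, ∏ j ∈ Icc 1 (lam i), ∏ k ∈ Icc 1 M, ∏ l ∈ Icc 1 (nu k),
        S ((u1 * q1 ^ (i - 1) * q2 ^ (j - 1)) / (u2 * q1 ^ (k - 1) * q2 ^ (l - 1)))
      = (∏ i ∈ Icc 1 N, ∏ j ∈ Icc 1 (lam i), ∏ k ∈ Icc 1 M, ∏ l ∈ Icc 1 (nu k),
            nekFactor (u1 / u2) q1 q2 ((i : ℤ) - k + 1, (j : ℤ) - l))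
          * (∏ i ∈ Icc 1 N, ∏ j ∈ Icc 1 (lam i), ∏ k ∈ Icc 1 M, ∏ l ∈ Icc 1 (nu k),
            nekFactor (u1 / u2) q1 q2 ((i : ℤ) - k, (j : ℤ) - l + 1))
        / ((∏ i ∈ Icc 1 N, ∏ j ∈ Icc 1 (lam i), ∏ k ∈ Icc 1 M, ∏ l ∈ Icc 1 (nu k),
            nekFactor (u1 / u2) q1 q2 ((i : ℤ) - k, (j : ℤ) - l))
          * (∏ i ∈ Icc 1 N, ∏ j ∈ Icc 1 (lam i), ∏ k ∈ Icc 1 M, ∏ l ∈ Icc 1 (nu k),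
            nekFactor (u1 / u2) q1 q2 ((i : ℤ) - k + 1, (j : ℤ) - l + 1))) := by
  simp only [← prod_mul_distrib, ← prod_div_distrib]
  refine prod_congr rfl fun i hi => prod_congr rfl fun j hj => prod_congr rfl fun k hk =>
    prod_congr rfl fun l hl => ?_
  rw [hS, content_div_content hq1 hq2 u1 u2 (mem_Icc.1 hi).1 (mem_Icc.1 hj).1 (mem_Icc.1 hk).1
    (mem_Icc.1 hl).1, S_eq_nekFactor hq1 hq2]

lemma prod_one_sub_mul_content (q1 q2 u1 u2 : K) (N : ℕ) (lam : ℕ → ℕ) :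
    ∏ i ∈ Icc 1 N, ∏ j ∈ Icc 1 (lam i), (1 - q1 * q2 * (u1 * q1 ^ (i - 1) * q2 ^ (j - 1)) / u2)
      = ∏ i ∈ Icc 1 N, ∏ j ∈ Icc 1 (lam i), nekFactor (u1 / u2) q1 q2 (i, j) := by
  refine prod_congr rfl fun i hi => prod_congr rfl fun j hj => ?_
  obtain ⟨i, rfl⟩ := Nat.exists_eq_add_of_le' (mem_Icc.1 hi).1
  obtain ⟨j, rfl⟩ := Nat.exists_eq_add_of_le' (mem_Icc.1 hj).1
  simp only [nekFactor, Nat.add_sub_cancel, zpow_natCast, pow_succ]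
  ring

lemma prod_one_sub_div_content (q1 q2 u1 u2 : K) (M : ℕ) (nu : ℕ → ℕ) :
    ∏ k ∈ Icc 1 M, ∏ l ∈ Icc 1 (nu k), (1 - u1 / (u2 * q1 ^ (k - 1) * q2 ^ (l - 1)))
      = ∏ k ∈ Icc 1 M, ∏ l ∈ Icc 1 (nu k), nekFactor (u1 / u2) q1 q2 (1 - k, 1 - l) := by
  refine prod_congr rfl fun k hk => prod_congr rfl fun l hl => ?_
  obtain ⟨k, rfl⟩ := Nat.exists_eq_add_of_le' (mem_Icc.1 hk).1
  obtain ⟨l, rfl⟩ := Nat.exists_eq_add_of_le' (mem_Icc.1 hl).1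
  simp only [nekFactor, Nat.add_sub_cancel, Nat.cast_succ, sub_add_cancel_right, zpow_neg,
    zpow_natCast]
  ring

lemma prod_pairs_ne_zero {f : ℕ → ℕ → ℕ → ℕ → K}
    (hf : ∀ i j k l, 1 ≤ i → 1 ≤ j → j ≤ lam i → 1 ≤ k → 1 ≤ l → l ≤ nu k → f i j k l ≠ 0) :
    ∏ i ∈ Icc 1 N, ∏ j ∈ Icc 1 (lam i), ∏ k ∈ Icc 1 M, ∏ l ∈ Icc 1 (nu k), f i j k l ≠ 0 := by
  simp only [prod_ne_zero_iff, mem_Icc]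
  exact fun i hi j hj k hk l hl => hf i j k l hi.1 hj.1 hj.2 hk.1 hl.1 hl.2

end Factors

end Nekrasov

open Nekrasov

theorem stmt16_general (q1 q2 u1 u2 : ℂ)
    (hq1 : q1 ≠ 0) (hq2 : q2 ≠ 0)
    (Nl Nn : ℕ) (lam nu : ℕ → ℕ)
    (hlam : ∀ i j : ℕ, i ≤ j → lam j ≤ lam i) (hNl : ∀ i : ℕ, Nl < i → lam i = 0)
    (hnu : ∀ i j : ℕ, i ≤ j → nu j ≤ nu i) (hNn : ∀ i : ℕ, Nn < i → nu i = 0)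
    (S : ℂ → ℂ)
    (hS : ∀ w : ℂ, S w = ((1 - q1 * w) * (1 - q2 * w)) / ((1 - w) * (1 - q1 * q2 * w)))
    (hgen : ∀ i j k l : ℕ, 1 ≤ i → 1 ≤ j → j ≤ lam i → 1 ≤ k → 1 ≤ l → l ≤ nu k →
      1 - (u1 * q1 ^ (i - 1) * q2 ^ (j - 1)) / (u2 * q1 ^ (k - 1) * q2 ^ (l - 1)) ≠ 0 ∧
      1 - q1 * q2 * (u1 * q1 ^ (i - 1) * q2 ^ (j - 1))
            / (u2 * q1 ^ (k - 1) * q2 ^ (l - 1)) ≠ 0) :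
    nek (u1 / u2) q1 q2 Nl Nn lam nu
      = (∏ i ∈ Finset.Icc 1 Nl, ∏ j ∈ Finset.Icc 1 (lam i),
          ∏ k ∈ Finset.Icc 1 Nn, ∏ l ∈ Finset.Icc 1 (nu k),
            S ((u1 * q1 ^ (i - 1) * q2 ^ (j - 1)) / (u2 * q1 ^ (k - 1) * q2 ^ (l - 1))))
        * (∏ i ∈ Finset.Icc 1 Nl, ∏ j ∈ Finset.Icc 1 (lam i),
            (1 - q1 * q2 * (u1 * q1 ^ (i - 1) * q2 ^ (j - 1)) / u2))
        * (∏ k ∈ Finset.Icc 1 Nn, ∏ l ∈ Finset.Icc 1 (nu k),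
            (1 - u1 / (u2 * q1 ^ (k - 1) * q2 ^ (l - 1)))) := by
  rw [nek_eq_prod_nekFactor, prod_S_content_eq hq1 hq2 hS, prod_one_sub_mul_content,
    prod_one_sub_div_content, div_mul_eq_mul_div, div_mul_eq_mul_div]
  refine (eq_div_iff (mul_ne_zero (prod_pairs_ne_zero ?_) (prod_pairs_ne_zero ?_))).2 ?_
  · intro i j k l hi hj hjl hk hl hlk
    have h := (hgen i j k l hi hj hjl hk hl hlk).1
    rwa [content_div_content hq1 hq2 u1 u2 hi hj hk hl] at h
  · intro i j k l hi hj hjl hk hl hlk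
    have h := (hgen i j k l hi hj hjl hk hl hlk).2
    rwa [mul_div_assoc, content_div_content hq1 hq2 u1 u2 hi hj hk hl,
      one_sub_mul_mul_eq_nekFactor hq1 hq2] at h
  · linear_combination prod_nek_mul_prod_pairs_eq (nekFactor (u1 / u2) q1 q2)
      (fun i j h => hlam i j h) hNl (fun i j h => hnu i j h) hNn

/-- For generic `q1, q2, u1, u2 ∈ ℂˣ` and partitions `λ, ν`, the Nekrasov
factor can be rewritten as
`N_{λν}(u1/u2; q1,q2) = ∏_{x∈λ,y∈ν} S(χ^λ_x/χ^ν_y) · ∏_{x∈λ} (1 - q1 q2 χ^λ_x/u2)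
  · ∏_{y∈ν} (1 - u1/χ^ν_y)`, where `χ^λ_{(i,j)} = u1 q1^{i-1} q2^{j-1}`,
`χ^ν_{(i,j)} = u2 q1^{i-1} q2^{j-1}` and `S(w) = (1-q1 w)(1-q2 w)/((1-w)(1-q1 q2 w))`. -/
theorem stmt16 (q1 q2 u1 u2 : ℂ)
    (hq1 : q1 ≠ 0) (hq2 : q2 ≠ 0) (hu1 : u1 ≠ 0) (hu2 : u2 ≠ 0)
    (Nl Nn : ℕ) (lam nu : ℕ → ℕ)
    (hlam : ∀ i j : ℕ, i ≤ j → lam j ≤ lam i) (hNl : ∀ i : ℕ, Nl < i → lam i = 0)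
    (hnu : ∀ i j : ℕ, i ≤ j → nu j ≤ nu i) (hNn : ∀ i : ℕ, Nn < i → nu i = 0)
    (S : ℂ → ℂ)
    (hS : ∀ w : ℂ, S w = ((1 - q1 * w) * (1 - q2 * w)) / ((1 - w) * (1 - q1 * q2 * w)))
    (hgen : ∀ i j k l : ℕ, 1 ≤ i → 1 ≤ j → j ≤ lam i → 1 ≤ k → 1 ≤ l → l ≤ nu k →
      1 - (u1 * q1 ^ (i - 1) * q2 ^ (j - 1)) / (u2 * q1 ^ (k - 1) * q2 ^ (l - 1)) ≠ 0 ∧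
      1 - q1 * q2 * (u1 * q1 ^ (i - 1) * q2 ^ (j - 1))
            / (u2 * q1 ^ (k - 1) * q2 ^ (l - 1)) ≠ 0) :
    nek (u1 / u2) q1 q2 Nl Nn lam nu
      = (∏ i ∈ Finset.Icc 1 Nl, ∏ j ∈ Finset.Icc 1 (lam i),
          ∏ k ∈ Finset.Icc 1 Nn, ∏ l ∈ Finset.Icc 1 (nu k),
            S ((u1 * q1 ^ (i - 1) * q2 ^ (j - 1)) / (u2 * q1 ^ (k - 1) * q2 ^ (l - 1))))
        * (∏ i ∈ Finset.Icc 1 Nl, ∏ j ∈ Finset.Icc 1 (lam i),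
            (1 - q1 * q2 * (u1 * q1 ^ (i - 1) * q2 ^ (j - 1)) / u2))
        * (∏ k ∈ Finset.Icc 1 Nn, ∏ l ∈ Finset.Icc 1 (nu k),
            (1 - u1 / (u2 * q1 ^ (k - 1) * q2 ^ (l - 1)))) :=
  stmt16_general q1 q2 u1 u2 hq1 hq2 Nl Nn lam nu hlam hNl hnu hNn S hS hgen
end

section
/- Let λ, ν be partitions, q1, q2, u1, u2 ∈ ℂ^× generic, and let s = (k, ν_k + 1) be an addable box of ν with content χ_s = u2 q1^{k-1} q2^{ν_k}. Then the Nekrasov factor N_{λν}(Q; q1, q2) = ∏_{(i,j)∈λ}(1 - Q q2^{-ν_i+j} q1^{λ^t_j-i+1}) ∏_{(i,j)∈ν}(1 - Q q2^{λ_i-j+1} q1^{-ν^t_j+i}) satisfies the recursion N_{λ, ν+s}(u1/u2; q1, q2) / N_{λν}(u1/u2; q1, q2) = Y_λ(χ_s, u1), where ν+s is the partition obtained from ν by adding the box s, Y_λ(z,u) = (1 - u/z) ∏_{(i,j)∈λ} S(u q1^{i-1} q2^{j-1}/z), and S(z) = (1-q1 z)(1-q2 z)/((1-z)(1-q1 q2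 z)). -/
/-!
Put `F(a, b) = 1 - Q q1^a q2^b` with `Q = u1/u2`. Every factor of `N_{λν}`, of `1 - u1/χ_s` and
of each `S(w)` is a value of `F`, so the claim is an identity between two finite products of
values of `F`. It suffices to prove it for the generators of the free abelian group on `ℤ × ℤ`:
the free commutative monoid embeds there, and it maps to ℂ whatever the values of `F`, zero
included.

In an abelian group the identity is a telescoping computation. Adding `s = (k, ν_k + 1)` changes
row `k` of the `λ`-part of `N`, contributes the factor of `s`, and changes column `ν_k + 1` of the
`ν`-part, which consists of the rows `i < k`. Grouping the columns `j ≤ λ_k` by `λᵗ_j` rewrites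
the row-`k` change as a product over the rows `i ≥ k` of `λ`. On the other side, the product of
`S` along a row of `λ` telescopes to the two ends of the row, and the resulting product over the
rows telescopes again.
-/

open Finset

section Transpose

lemma transposeFn_le (N : ℕ) (lam : ℕ → ℕ) (j : ℕ) : transposeFn N lam j ≤ N :=
  (card_filter_le _ _).trans (by simp)

variable {N : ℕ} {lam : ℕ → ℕ}

lemma le_transposeFn_iff (hlam : Antitone lam) (hN : ∀ i, N < i → lam i = 0) {i j : ℕ}
    (hi : 1 ≤ i) (hj : 1 ≤ j) : i ≤ transposeFn N lam j ↔ j ≤ lam i := by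
  unfold transposeFn
  constructor
  · intro h
    by_contra hlt
    have hsub : (Icc 1 N).filter (fun i' => j ≤ lam i') ⊆ Icc 1 (i - 1) := by
      intro i' hi'
      simp only [mem_filter, mem_Icc] at hi' ⊢
      refine ⟨hi'.1.1, ?_⟩
      by_contra
      have := hlam (show i ≤ i' by omega)
      omega
    have := card_le_card hsub
    simp only [Nat.card_Icc] at this
    omega
  · intro h
    have hiN : i ≤ N := by
      by_contra
      have := hN i (by omega)
      omega
    have hsub : Icc 1 i ⊆ (Icc 1 N).filter (fun i' => j ≤ lam i') := by
      intro i' hi'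
      simp only [mem_filter, mem_Icc] at hi' ⊢
      exact ⟨⟨hi'.1, by omega⟩, h.trans (hlam hi'.2)⟩
    simpa using card_le_card hsub

lemma transposeFn_eq_iff (hlam : Antitone lam) (hN : ∀ i, N < i → lam i = 0) {i j : ℕ}
    (hi : 1 ≤ i) (hj : 1 ≤ j) : transposeFn N lam j = i ↔ lam (i + 1) < j ∧ j ≤ lam i := by
  rw [← le_transposeFn_iff hlam hN hi hj, lt_iff_not_ge,
    ← le_transposeFn_iff hlam hN (by omega : 1 ≤ i + 1) hj]
  omega

lemma transposeFn_eq_of_le {N' : ℕ} (hNN' : N ≤ N') (hN : ∀ i, N < i → lam i = 0) {j : ℕ}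
    (hj : 1 ≤ j) : transposeFn N' lam j = transposeFn N lam j := by
  unfold transposeFn
  congr 1
  ext i
  have := hN i
  simp only [mem_filter, mem_Icc]
  constructor <;> intro h <;> refine ⟨⟨h.1.1, ?_⟩, h.2⟩ <;> omega

lemma transposeFn_addBox {k : ℕ} (hk : k ∈ Icc 1 N) {nu nu' : ℕ → ℕ}
    (hnu' : ∀ i, nu' i = if i = k then nu i + 1 else nu i) (j : ℕ) :
    transposeFn N nu' j = transposeFn N nu j + if j = nu k + 1 then 1 else 0 := by
  have hrow : ∀ i, (if j ≤ nu' i then 1 else 0)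
      = (if j ≤ nu i then 1 else 0) + if k = i then (if j = nu k + 1 then 1 else 0) else 0 := by
    intro i
    rw [hnu']
    by_cases hik : i = k
    · subst hik
      simp only [if_true]
      split_ifs <;> omega
    · simp [hik, Ne.symm hik]
  simp only [transposeFn, card_filter, hrow, sum_add_distrib, sum_ite_eq, if_pos hk]

lemma transposeFn_addable (hlam : Antitone lam) (hN : ∀ i, N < i → lam i = 0) {k : ℕ}
    (hk : 1 ≤ k) (haddable : k = 1 ∨ lam k < lam (k - 1)) :
    transposeFn N lam (lam k + 1) = k - 1 := by
  refine le_antisymm ?_ ?_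
  · by_contra h
    have := (le_transposeFn_iff (i := k) (j := lam k + 1) hlam hN hk (by omega)).1 (by omega)
    omega
  · obtain rfl | hk2 : k = 1 ∨ 2 ≤ k := by omega
    · exact Nat.zero_le _
    · have h : lam k < lam (k - 1) := haddable.resolve_left (by omega)
      exact (le_transposeFn_iff (i := k - 1) (j := lam k + 1) hlam hN (by omega) (by omega)).2 h

end Transpose

section Telescoping

variable {G : Type*} [AddCommGroup G]

lemma sum_Ioc_sub_telescope (h : ℤ → G) {a b : ℕ} (hab : a ≤ b) :
    ∑ j ∈ Ioc a b, (h j - h (j - 1)) = h b - h a := by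
  induction b, hab using Nat.le_induction with
  | base => simp
  | succ b hab ih =>
    rw [sum_Ioc_succ_top hab, ih]
    push_cast
    rw [add_sub_cancel_right]
    abel

lemma sum_Icc_one_sub_telescope (h : ℤ → G) (n : ℕ) :
    ∑ j ∈ Icc 1 n, (h j - h (j - 1)) = h n - h 0 := by
  simpa [← Icc_add_one_left_eq_Ioc] using sum_Ioc_sub_telescope h (Nat.zero_le n)

lemma sum_boxes_telescope (f : ℤ → ℤ → G) (lam : ℕ → ℕ) (N : ℕ) (k m : ℤ) :
    ∑ i ∈ Icc 1 N, ∑ j ∈ Icc 1 (lam i),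
        (f (i + 1 - k) (j - 1 - m) + f (i - k) (j - m)
          - (f (i - k) (j - 1 - m) + f (i + 1 - k) (j - m)))
      = f (N + 1 - k) (-m) - f (1 - k) (-m)
        + ∑ i ∈ Icc 1 N, (f (i - k) (lam i - m) - f (i + 1 - k) (lam i - m)) := by
  have hrow : ∀ i : ℕ, ∑ j ∈ Icc 1 (lam i),
      (f (i + 1 - k) (j - 1 - m) + f (i - k) (j - m)
        - (f (i - k) (j - 1 - m) + f (i + 1 - k) (j - m)))
      = (f (i + 1 - k) (-m) - f (i - k) (-m))
        + (f (i - k) (lam i - m) - f (i + 1 - k) (lam i - m)) := by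
    intro i
    have h1 := sum_Icc_one_sub_telescope (fun y => f (i - k) (y - m)) (lam i)
    have h2 := sum_Icc_one_sub_telescope (fun y => f (i + 1 - k) (y - m)) (lam i)
    rw [zero_sub] at h1 h2
    calc _ = ∑ j ∈ Icc 1 (lam i), ((f (i - k) (j - m) - f (i - k) (j - 1 - m))
          - (f (i + 1 - k) (j - m) - f (i + 1 - k) (j - 1 - m))) := sum_congr rfl fun _ _ => by abel
      _ = _ := by rw [sum_sub_distrib, h1, h2]; abel
  have hcol := sum_Icc_one_sub_telescope (fun y => f (y + 1 - k) (-m)) N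
  simp only [sub_add_cancel, zero_add] at hcol
  rw [sum_congr rfl fun i _ => hrow i, sum_add_distrib, hcol]

lemma sum_Icc_one_split {M : Type*} [AddCommMonoid M] (h : ℕ → M) {k n : ℕ} (hk : 1 ≤ k) (hkn : k ≤ n + 1) :
    ∑ i ∈ Icc 1 n, h i = ∑ i ∈ Icc 1 (k - 1), h i + ∑ i ∈ Icc k n, h i := by
  have hIcc : ∀ a b : ℕ, Icc (a + 1) b = Ioc a b := Icc_add_one_left_eq_Ioc
  obtain ⟨k, rfl⟩ : ∃ k', k = k' + 1 := ⟨k - 1, by omega⟩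
  rw [hIcc, hIcc, Nat.add_sub_cancel, hIcc, sum_Ioc_consecutive _ (Nat.zero_le k) (by omega)]

end Telescoping

section Corner

variable {G : Type*} [AddCommGroup G] {N : ℕ} {lam : ℕ → ℕ}

lemma sum_Icc_transposeFn {M : Type*} [AddCommMonoid M] (hlam : Antitone lam)
    (hN : ∀ i, N < i → lam i = 0) {k : ℕ} (hk : 1 ≤ k) (h : ℕ → ℕ → M) :
    ∑ j ∈ Icc 1 (lam k), h (transposeFn N lam j) j
      = ∑ i ∈ Icc k N, ∑ j ∈ Ioc (lam (i + 1)) (lam i), h i j := by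
  refine (sum_fiberwise_of_maps_to (g := transposeFn N lam) (t := Icc k N) (fun j hj => ?_)
    _).symm.trans (sum_congr rfl fun i hi => ?_)
  · rw [mem_Icc] at hj ⊢
    exact ⟨(le_transposeFn_iff hlam hN hk hj.1).2 hj.2, transposeFn_le N lam j⟩
  · rw [mem_Icc] at hi
    calc _ = ∑ j ∈ (Icc 1 (lam k)).filter (fun j => transposeFn N lam j = i), h i j :=
          sum_congr rfl fun j hj => by rw [(mem_filter.1 hj).2]
      _ = _ := by
          congr 1
          ext j
          simp only [mem_filter, mem_Icc, mem_Ioc]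
          have := hlam hi.1
          constructor
          · rintro ⟨hj, hji⟩
            exact (transposeFn_eq_iff hlam hN (by omega) hj.1).1 hji
          · rintro hj
            exact ⟨⟨by omega, by omega⟩, (transposeFn_eq_iff hlam hN (by omega) (by omega)).2 hj⟩

lemma sum_boundary_eq_of_le (f : ℤ → ℤ → G) (hlam : Antitone lam) (hN : ∀ i, N < i → lam i = 0)
    {k : ℕ} (hk : 1 ≤ k) (hkN : k ≤ N) (m : ℤ) :
    ∑ j ∈ Icc 1 (lam k),
        (f (transposeFn N lam j + 1 - k) (j - 1 - m) - f (transposeFn N lam j + 1 - k) (j - m))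
      + f 0 (lam k - m)
      + ∑ i ∈ Icc 1 (k - 1), (f (i - k) (lam i - m) - f (i + 1 - k) (lam i - m))
      = f (N + 1 - k) (-m)
        + ∑ i ∈ Icc 1 N, (f (i - k) (lam i - m) - f (i + 1 - k) (lam i - m)) := by
  have hcols : ∑ j ∈ Icc 1 (lam k),
      (f (transposeFn N lam j + 1 - k) (j - 1 - m) - f (transposeFn N lam j + 1 - k) (j - m))
      = ∑ i ∈ Icc k N, (f (i + 1 - k) (lam (i + 1) - m) - f (i + 1 - k) (lam i - m)) := by
    rw [sum_Icc_transposeFn hlam hN hk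
      (fun a b => f ((a : ℤ) + 1 - k) ((b : ℤ) - 1 - m) - f ((a : ℤ) + 1 - k) (b - m))]
    refine sum_congr rfl fun i _ => ?_
    have := sum_Ioc_sub_telescope (fun y => f (i + 1 - k) (y - m)) (hlam (Nat.le_add_right i 1))
    calc _ = -∑ j ∈ Ioc (lam (i + 1)) (lam i),
          (f (i + 1 - k) (j - m) - f (i + 1 - k) (j - 1 - m)) := by
          rw [← sum_neg_distrib]
          exact sum_congr rfl fun _ _ => (neg_sub _ _).symm
      _ = _ := by rw [this, neg_sub]
  have hrows : ∑ i ∈ Icc k N, (f (i + 1 - k) (lam (i + 1) - m) - f (i - k) (lam i - m))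
      = f (N + 1 - k) (-m) - f 0 (lam k - m) := by
    have := sum_Icc_sub hkN (fun i : ℕ => f ((i : ℤ) - k) ((lam i : ℤ) - m))
    simpa only [Nat.cast_add, Nat.cast_one, hN (N + 1) (Nat.lt_succ_self N), Nat.cast_zero,
      zero_sub, sub_self] using this
  have hsplit : ∑ i ∈ Icc k N, (f (i + 1 - k) (lam (i + 1) - m) - f (i + 1 - k) (lam i - m))
      = ∑ i ∈ Icc k N, ((f (i + 1 - k) (lam (i + 1) - m) - f (i - k) (lam i - m))
        + (f (i - k) (lam i - m) - f (i + 1 - k) (lam i - m))) :=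
    sum_congr rfl fun _ _ => by abel
  rw [hcols, sum_Icc_one_split (n := N) _ hk (by omega), ← sub_add_cancel (f _ (-m)) (f 0 _),
    ← hrows, hsplit, sum_add_distrib]
  abel

lemma sum_boundary_eq_sum_boxes (f : ℤ → ℤ → G) (hlam : Antitone lam) (hN : ∀ i, N < i → lam i = 0)
    {k : ℕ} (hk : 1 ≤ k) (m : ℤ) :
    ∑ j ∈ Icc 1 (lam k),
        (f (transposeFn N lam j + 1 - k) (j - 1 - m) - f (transposeFn N lam j + 1 - k) (j - m))
      + f 0 (lam k - m)
      + ∑ i ∈ Icc 1 (k - 1), (f (i - k) (lam i - m) - f (i + 1 - k) (lam i - m))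
      = f (1 - k) (-m) + ∑ i ∈ Icc 1 N, ∑ j ∈ Icc 1 (lam i),
          (f (i + 1 - k) (j - 1 - m) + f (i - k) (j - m)
            - (f (i - k) (j - 1 - m) + f (i + 1 - k) (j - m))) := by
  have hNN' : N ≤ max N k := le_max_left N k
  have hN' : ∀ i, max N k < i → lam i = 0 := fun i hi => hN i (hNN'.trans_lt hi)
  have hcols : ∑ j ∈ Icc 1 (lam k),
      (f (transposeFn N lam j + 1 - k) (j - 1 - m) - f (transposeFn N lam j + 1 - k) (j - m))
      = ∑ j ∈ Icc 1 (lam k), (f (transposeFn (max N k) lam j + 1 - k) (j - 1 - m)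
          - f (transposeFn (max N k) lam j + 1 - k) (j - m)) :=
    sum_congr rfl fun j hj => by rw [transposeFn_eq_of_le hNN' hN (mem_Icc.1 hj).1]
  have hrows : ∑ i ∈ Icc 1 N, ∑ j ∈ Icc 1 (lam i),
      (f (i + 1 - k) (j - 1 - m) + f (i - k) (j - m)
        - (f (i - k) (j - 1 - m) + f (i + 1 - k) (j - m)))
      = ∑ i ∈ Icc 1 (max N k), ∑ j ∈ Icc 1 (lam i),
      (f (i + 1 - k) (j - 1 - m) + f (i - k) (j - m)
        - (f (i - k) (j - 1 - m) + f (i + 1 - k) (j - m))) := by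
    refine sum_subset (Icc_subset_Icc_right hNN') fun i hi hiN => ?_
    rw [mem_Icc] at hi hiN
    rw [hN i (by omega), Icc_eq_empty (by omega), sum_empty]
  rw [hcols, hrows, sum_boxes_telescope, sum_boundary_eq_of_le f hlam hN' hk (le_max_right N k) m]
  abel

end Corner

section Nekrasov

variable {M : Type*} [CommMonoid M]

@[to_additive]
def nekProdLam (f : ℤ → ℤ → M) (Nl : ℕ) (lam nu : ℕ → ℕ) : M :=
  ∏ i ∈ Icc 1 Nl, ∏ j ∈ Icc 1 (lam i), f (transposeFn Nl lam j - i + 1) (j - nu i)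

@[to_additive]
def nekProdNu (f : ℤ → ℤ → M) (Nn : ℕ) (lam nu : ℕ → ℕ) : M :=
  ∏ i ∈ Icc 1 Nn, ∏ j ∈ Icc 1 (nu i), f (i - transposeFn Nn nu j) (lam i - j + 1)

@[to_additive]
lemma map_nekProdLam {M' F : Type*} [CommMonoid M'] [FunLike F M M'] [MonoidHomClass F M M']
    (φ : F) (f : ℤ → ℤ → M) (Nl : ℕ) (lam nu : ℕ → ℕ) :
    φ (nekProdLam f Nl lam nu) = nekProdLam (fun a b => φ (f a b)) Nl lam nu := by
  simp only [nekProdLam, map_prod]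

@[to_additive]
lemma map_nekProdNu {M' F : Type*} [CommMonoid M'] [FunLike F M M'] [MonoidHomClass F M M']
    (φ : F) (f : ℤ → ℤ → M) (Nn : ℕ) (lam nu : ℕ → ℕ) :
    φ (nekProdNu f Nn lam nu) = nekProdNu (fun a b => φ (f a b)) Nn lam nu := by
  simp only [nekProdNu, map_prod]

end Nekrasov

section AddBox

variable {G : Type*} [AddCommGroup G] {lam nu nu' : ℕ → ℕ} {k Nl Nn : ℕ}

lemma nekSumLam_addBox (f : ℤ → ℤ → G) (hNl : ∀ i, Nl < i → lam i = 0) (hk : 1 ≤ k)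
    (hnu' : ∀ i, nu' i = if i = k then nu i + 1 else nu i) :
    nekSumLam f Nl lam nu' = nekSumLam f Nl lam nu
      + ∑ j ∈ Icc 1 (lam k), (f (transposeFn Nl lam j + 1 - k) (j - 1 - nu k)
          - f (transposeFn Nl lam j + 1 - k) (j - nu k)) := by
  rw [← sub_eq_iff_eq_add', nekSumLam, nekSumLam, ← sum_sub_distrib]
  refine (sum_eq_single k (fun i _ hik => ?_) (fun hk' => ?_)).trans ?_
  · rw [hnu', if_neg hik, sub_self]
  · rw [mem_Icc] at hk'
    rw [hNl k (by omega), Icc_eq_empty (by omega), sum_empty, sum_empty, sub_self]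
  · rw [← sum_sub_distrib]
    refine sum_congr rfl fun j _ => ?_
    rw [hnu', if_pos rfl]
    push_cast
    congr 1 <;> congr 1 <;> ring

lemma nekSumNu_succ (f : ℤ → ℤ → G) (lam : ℕ → ℕ) (hNn : ∀ i, Nn < i → nu i = 0) :
    nekSumNu f (Nn + 1) lam nu = nekSumNu f Nn lam nu := by
  rw [nekSumNu, sum_Icc_succ_top (by omega), hNn (Nn + 1) (by omega),
    Icc_eq_empty_of_lt Nat.zero_lt_one, sum_empty, add_zero, nekSumNu]
  exact sum_congr rfl fun i _ => sum_congr rfl fun j hj => by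
    rw [transposeFn_eq_of_le (Nat.le_add_right Nn 1) hNn (mem_Icc.1 hj).1]

lemma sum_row_addBox (f : ℤ → ℤ → G) (lam : ℕ → ℕ) (hnu : Antitone nu) (hk1 : 1 ≤ k)
    (haddable : k = 1 ∨ nu k < nu (k - 1)) (hnu' : ∀ i, nu' i = if i = k then nu i + 1 else nu i)
    {T T' : ℕ → ℕ} (hT'ne : ∀ j, j ≠ nu k + 1 → T' j = T j) (hT'c : T' (nu k + 1) = k)
    (hTc : T (nu k + 1) = k - 1) {i : ℕ} (hi : 1 ≤ i) :
    ∑ j ∈ Icc 1 (nu' i), f (i - T' j) (lam i - j + 1)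
      = ∑ j ∈ Icc 1 (nu i), f (i - T j) (lam i - j + 1)
        + (if k = i then f 0 (lam k - nu k) else 0)
        + (if i < k then f (i - k) (lam i - nu k) - f (i + 1 - k) (lam i - nu k) else 0) := by
  rcases lt_trichotomy i k with hik | rfl | hik
  · have hc : nu k + 1 ∈ Icc 1 (nu i) := by
      have := hnu (show i ≤ k - 1 by omega)
      have := haddable.resolve_left (by omega)
      exact mem_Icc.2 ⟨by omega, by omega⟩
    have hrest : ∑ j ∈ (Icc 1 (nu i)).erase (nu k + 1), f (i - T' j) (lam i - j + 1)
        = ∑ j ∈ (Icc 1 (nu i)).erase (nu k + 1), f (i - T j) (lam i - j + 1) :=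
      sum_congr rfl fun j hj => by rw [hT'ne j (ne_of_mem_erase hj)]
    rw [hnu' i, if_neg hik.ne, if_neg hik.ne', if_pos hik, add_zero, ← sum_erase_add _ _ hc,
      ← sum_erase_add _ _ hc, hrest, hT'c, hTc, Nat.cast_sub hk1]
    push_cast
    rw [show (i : ℤ) - (k - 1) = i + 1 - k by ring,
      show (lam i : ℤ) - (nu k + 1) + 1 = lam i - nu k by ring]
    abel
  · have hrest : ∑ j ∈ Icc 1 (nu i), f (i - T' j) (lam i - j + 1)
        = ∑ j ∈ Icc 1 (nu i), f (i - T j) (lam i - j + 1) :=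
      sum_congr rfl fun j hj => by rw [hT'ne j (by rw [mem_Icc] at hj; omega)]
    rw [hnu' i, if_pos rfl, if_pos rfl, if_neg (lt_irrefl i), add_zero,
      sum_Icc_succ_top (by omega), hrest, hT'c]
    push_cast
    rw [sub_self, show (lam i : ℤ) - (nu i + 1) + 1 = lam i - nu i by ring]
  · have := hnu hik.le
    rw [hnu' i, if_neg hik.ne', if_neg hik.ne, if_neg (not_lt.2 hik.le), add_zero, add_zero]
    exact sum_congr rfl fun j hj => by rw [hT'ne j (by rw [mem_Icc] at hj; omega)]

lemma nekSumNu_addBox (f : ℤ → ℤ → G) (lam : ℕ → ℕ) (hnu : Antitone nu)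
    (hNn : ∀ i, Nn < i → nu i = 0) (hk1 : 1 ≤ k) (hk2 : k ≤ Nn + 1)
    (haddable : k = 1 ∨ nu k < nu (k - 1)) (hnu' : ∀ i, nu' i = if i = k then nu i + 1 else nu i) :
    nekSumNu f (Nn + 1) lam nu' = nekSumNu f Nn lam nu + f 0 (lam k - nu k)
      + ∑ i ∈ Icc 1 (k - 1), (f (i - k) (lam i - nu k) - f (i + 1 - k) (lam i - nu k)) := by
  have hNn' : ∀ i, Nn + 1 < i → nu i = 0 := fun i hi => hNn i (by omega)
  have hkmem : k ∈ Icc 1 (Nn + 1) := mem_Icc.2 ⟨hk1, hk2⟩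
  have hTc := transposeFn_addable hnu hNn' hk1 haddable
  have hT'ne : ∀ j, j ≠ nu k + 1 → transposeFn (Nn + 1) nu' j = transposeFn (Nn + 1) nu j :=
    fun j hj => by rw [transposeFn_addBox hkmem hnu', if_neg hj, add_zero]
  have hT'c : transposeFn (Nn + 1) nu' (nu k + 1) = k := by
    rw [transposeFn_addBox hkmem hnu', if_pos rfl, hTc]
    omega
  rw [← nekSumNu_succ f lam hNn, nekSumNu, nekSumNu,
    sum_congr rfl fun i hi => sum_row_addBox f lam hnu hk1 haddable hnu' hT'ne hT'c hTc
      (mem_Icc.1 hi).1,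
    sum_add_distrib, sum_add_distrib, sum_ite_eq, if_pos hkmem, ← sum_filter]
  congr 2
  ext i
  simp only [mem_filter, mem_Icc]
  omega

lemma nekSum_addBox (f : ℤ → ℤ → G) (hlam : Antitone lam)
    (hNl : ∀ i, Nl < i → lam i = 0) (hnu : Antitone nu) (hNn : ∀ i, Nn < i → nu i = 0)
    (hk1 : 1 ≤ k) (hk2 : k ≤ Nn + 1) (haddable : k = 1 ∨ nu k < nu (k - 1))
    (hnu' : ∀ i, nu' i = if i = k then nu i + 1 else nu i) :
    nekSumLam f Nl lam nu' + nekSumNu f (Nn + 1) lam nu'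
        + ∑ i ∈ Icc 1 Nl, ∑ j ∈ Icc 1 (lam i), (f (i - k) (j - 1 - nu k) + f (i + 1 - k) (j - nu k))
      = nekSumLam f Nl lam nu + nekSumNu f Nn lam nu + f (1 - k) (-nu k)
        + ∑ i ∈ Icc 1 Nl, ∑ j ∈ Icc 1 (lam i),
            (f (i + 1 - k) (j - 1 - nu k) + f (i - k) (j - nu k)) := by
  have hboundary := sum_boundary_eq_sum_boxes f hlam hNl hk1 (nu k)
  rw [nekSumLam_addBox f hNl hk1 hnu', nekSumNu_addBox f lam hnu hNn hk1 hk2 haddable hnu']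
  simp only [sum_sub_distrib] at hboundary ⊢
  rw [← sub_eq_zero, ← sub_eq_zero.2 hboundary]
  abel

theorem nekProd_addBox {M : Type*} [CommMonoid M] (f : ℤ → ℤ → M) (hlam : Antitone lam)
    (hNl : ∀ i, Nl < i → lam i = 0) (hnu : Antitone nu) (hNn : ∀ i, Nn < i → nu i = 0)
    (hk1 : 1 ≤ k) (hk2 : k ≤ Nn + 1) (haddable : k = 1 ∨ nu k < nu (k - 1))
    (hnu' : ∀ i, nu' i = if i = k then nu i + 1 else nu i) :
    nekProdLam f Nl lam nu' * nekProdNu f (Nn + 1) lam nu'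
        * ∏ i ∈ Icc 1 Nl, ∏ j ∈ Icc 1 (lam i), (f (i - k) (j - 1 - nu k) * f (i + 1 - k) (j - nu k))
      = nekProdLam f Nl lam nu * nekProdNu f Nn lam nu * f (1 - k) (-nu k)
        * ∏ i ∈ Icc 1 Nl, ∏ j ∈ Icc 1 (lam i),
            (f (i + 1 - k) (j - 1 - nu k) * f (i - k) (j - nu k)) := by
  set gen : ℤ → ℤ → Multiplicative (ℤ × ℤ →₀ ℕ) := fun a b => .ofAdd (Finsupp.single (a, b) 1)
  have hfree : nekProdLam gen Nl lam nu' * nekProdNu gen (Nn + 1) lam nu'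
        * ∏ i ∈ Icc 1 Nl, ∏ j ∈ Icc 1 (lam i),
            (gen (i - k) (j - 1 - nu k) * gen (i + 1 - k) (j - nu k))
      = nekProdLam gen Nl lam nu * nekProdNu gen Nn lam nu * gen (1 - k) (-nu k)
        * ∏ i ∈ Icc 1 Nl, ∏ j ∈ Icc 1 (lam i),
            (gen (i + 1 - k) (j - 1 - nu k) * gen (i - k) (j - nu k)) := by
    let ι : Multiplicative (ℤ × ℤ →₀ ℕ) →* Multiplicative (ℤ × ℤ →₀ ℤ) :=
      AddMonoidHom.toMultiplicative (Finsupp.mapRange.addMonoidHom (Nat.castAddMonoidHom ℤ))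
    have hι : Function.Injective ι := Finsupp.mapRange_injective _ Nat.cast_zero Nat.cast_injective
    apply hι
    simp only [map_mul, map_prod, map_nekProdLam, map_nekProdNu]
    exact nekSum_addBox (fun a b => (ι (gen a b)).toAdd) hlam hNl hnu hNn hk1 hk2 haddable hnu'
  let φ : Multiplicative (ℤ × ℤ →₀ ℕ) →* M := AddMonoidHom.toMultiplicativeLeft
    (Finsupp.liftAddHom fun x => multiplesHom (Additive M) (Additive.ofMul (f x.1 x.2)))
  have hφ : ∀ a b, φ (gen a b) = f a b := fun a b => by simp [φ, gen]
  simpa only [map_mul, map_prod, map_nekProdLam, map_nekProdNu, hφ] using congrArg φ hfree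

end AddBox

section Specialization

noncomputable def nekFactor (Q q1 q2 : ℂ) (a b : ℤ) : ℂ := 1 - Q * q1 ^ a * q2 ^ b

lemma nek_eq_nekProd (Q q1 q2 : ℂ) (Nl Nn : ℕ) (lam nu : ℕ → ℕ) :
    nek Q q1 q2 Nl Nn lam nu
      = nekProdLam (nekFactor Q q1 q2) Nl lam nu * nekProdNu (nekFactor Q q1 q2) Nn lam nu := by
  unfold nek nekProdLam nekProdNu nekFactor
  congr 1 <;> exact prod_congr rfl fun i _ => prod_congr rfl fun j _ => by ring

variable {q1 q2 : ℂ}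

lemma box_weight_eq (hq1 : q1 ≠ 0) (hq2 : q2 ≠ 0) {u1 u2 χs : ℂ} (hu2 : u2 ≠ 0) {k m : ℕ}
    (hk : 1 ≤ k) (hχs : χs = u2 * q1 ^ (k - 1) * q2 ^ m) {i j : ℕ} (hi : 1 ≤ i) (hj : 1 ≤ j) :
    u1 * q1 ^ (i - 1) * q2 ^ (j - 1) / χs
      = u1 / u2 * q1 ^ ((i : ℤ) - k) * q2 ^ ((j : ℤ) - 1 - m) := by
  obtain ⟨i, rfl⟩ : ∃ i', i = i' + 1 := ⟨i - 1, by omega⟩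
  obtain ⟨j, rfl⟩ : ∃ j', j = j' + 1 := ⟨j - 1, by omega⟩
  obtain ⟨k, rfl⟩ : ∃ k', k = k' + 1 := ⟨k - 1, by omega⟩
  push_cast
  rw [show (i : ℤ) + 1 - (k + 1) = i - k by ring, show (j : ℤ) + 1 - 1 - m = j - m by ring,
    zpow_sub₀ hq1, zpow_sub₀ hq2, zpow_natCast, zpow_natCast, zpow_natCast, zpow_natCast, hχs]
  simp only [Nat.add_sub_cancel]
  field_simp

lemma one_sub_div_eq_nekFactor (hq1 : q1 ≠ 0) (hq2 : q2 ≠ 0) {u1 u2 χs : ℂ} (hu2 : u2 ≠ 0)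
    {k m : ℕ} (hk : 1 ≤ k) (hχs : χs = u2 * q1 ^ (k - 1) * q2 ^ m) :
    1 - u1 / χs = nekFactor (u1 / u2) q1 q2 (1 - k) (-m) := by
  have h := box_weight_eq (u1 := u1) hq1 hq2 hu2 hk hχs (i := 1) (j := 1) le_rfl le_rfl
  simp only [Nat.sub_self, pow_zero, mul_one, Nat.cast_one, sub_self, zero_sub] at h
  rw [h, nekFactor]

lemma nekFactor_add_one_add_one (hq1 : q1 ≠ 0) (hq2 : q2 ≠ 0) (Q : ℂ) (a b : ℤ) :
    nekFactor Q q1 q2 (a + 1) (b + 1) = 1 - q1 * q2 * (Q * q1 ^ a * q2 ^ b) := by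
  simp only [nekFactor, zpow_add_one₀ hq1, zpow_add_one₀ hq2]
  ring

lemma S_mul_nekFactor {S : ℂ → ℂ}
    (hS : ∀ w, S w = ((1 - q1 * w) * (1 - q2 * w)) / ((1 - w) * (1 - q1 * q2 * w)))
    (hq1 : q1 ≠ 0) (hq2 : q2 ≠ 0) {Q : ℂ} {a b : ℤ} (h0 : nekFactor Q q1 q2 a b ≠ 0)
    (h1 : nekFactor Q q1 q2 (a + 1) (b + 1) ≠ 0) :
    S (Q * q1 ^ a * q2 ^ b) * (nekFactor Q q1 q2 a b * nekFactor Q q1 q2 (a + 1) (b + 1))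
      = nekFactor Q q1 q2 (a + 1) b * nekFactor Q q1 q2 a (b + 1) := by
  rw [nekFactor_add_one_add_one hq1 hq2] at h1 ⊢
  rw [nekFactor] at h0
  rw [hS, div_mul_eq_mul_div, div_eq_iff (mul_ne_zero h0 h1)]
  simp only [nekFactor, zpow_add_one₀ hq1, zpow_add_one₀ hq2]
  ring

lemma S_mul_nekFactor_box {S : ℂ → ℂ}
    (hS : ∀ w, S w = ((1 - q1 * w) * (1 - q2 * w)) / ((1 - w) * (1 - q1 * q2 * w)))
    (hq1 : q1 ≠ 0) (hq2 : q2 ≠ 0) {u1 u2 χs : ℂ} (hu2 : u2 ≠ 0) {k m : ℕ}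
    (hk : 1 ≤ k) (hχs : χs = u2 * q1 ^ (k - 1) * q2 ^ m) {i j : ℕ} (hi : 1 ≤ i) (hj : 1 ≤ j)
    (hgen : 1 - (u1 * q1 ^ (i - 1) * q2 ^ (j - 1)) / χs ≠ 0 ∧
      1 - q1 * q2 * (u1 * q1 ^ (i - 1) * q2 ^ (j - 1)) / χs ≠ 0) :
    S (u1 * q1 ^ (i - 1) * q2 ^ (j - 1) / χs)
        * (nekFactor (u1 / u2) q1 q2 (i - k) (j - 1 - m)
          * nekFactor (u1 / u2) q1 q2 (i + 1 - k) (j - m))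
      = nekFactor (u1 / u2) q1 q2 (i + 1 - k) (j - 1 - m)
        * nekFactor (u1 / u2) q1 q2 (i - k) (j - m)
    ∧ nekFactor (u1 / u2) q1 q2 (i - k) (j - 1 - m)
        * nekFactor (u1 / u2) q1 q2 (i + 1 - k) (j - m) ≠ 0 := by
  obtain ⟨h0, h1⟩ := hgen
  rw [mul_div_assoc, box_weight_eq hq1 hq2 hu2 hk hχs hi hj,
    ← nekFactor_add_one_add_one hq1 hq2] at h1
  rw [box_weight_eq hq1 hq2 hu2 hk hχs hi hj] at h0 ⊢
  rw [show (i : ℤ) + 1 - k = i - k + 1 by ring, show (j : ℤ) - m = j - 1 - m + 1 by ring]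
  exact ⟨S_mul_nekFactor hS hq1 hq2 h0 h1, mul_ne_zero h0 h1⟩

end Specialization

theorem stmt18_general (q1 q2 u1 u2 : ℂ)
    (hq1 : q1 ≠ 0) (hq2 : q2 ≠ 0) (hu2 : u2 ≠ 0)
    (Nl Nn : ℕ) (lam nu : ℕ → ℕ)
    (hlam : ∀ i j : ℕ, i ≤ j → lam j ≤ lam i) (hNl : ∀ i : ℕ, Nl < i → lam i = 0)
    (hnu : ∀ i j : ℕ, i ≤ j → nu j ≤ nu i) (hNn : ∀ i : ℕ, Nn < i → nu i = 0)
    (k : ℕ) (hk1 : 1 ≤ k) (hk2 : k ≤ Nn + 1)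
    (haddable : k = 1 ∨ nu k < nu (k - 1))
    (nu' : ℕ → ℕ) (hnu' : ∀ i : ℕ, nu' i = if i = k then nu i + 1 else nu i)
    (χs : ℂ) (hχs : χs = u2 * q1 ^ (k - 1) * q2 ^ (nu k))
    (S : ℂ → ℂ)
    (hS : ∀ w : ℂ, S w = ((1 - q1 * w) * (1 - q2 * w)) / ((1 - w) * (1 - q1 * q2 * w)))
    (hgen : ∀ i j : ℕ, 1 ≤ i → 1 ≤ j → j ≤ lam i →
      1 - (u1 * q1 ^ (i - 1) * q2 ^ (j - 1)) / χs ≠ 0 ∧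
      1 - q1 * q2 * (u1 * q1 ^ (i - 1) * q2 ^ (j - 1)) / χs ≠ 0)
    (hne : nek (u1 / u2) q1 q2 Nl Nn lam nu ≠ 0) :
    nek (u1 / u2) q1 q2 Nl (Nn + 1) lam nu' / nek (u1 / u2) q1 q2 Nl Nn lam nu
      = (1 - u1 / χs) *
          ∏ i ∈ Finset.Icc 1 Nl, ∏ j ∈ Finset.Icc 1 (lam i),
            S ((u1 * q1 ^ (i - 1) * q2 ^ (j - 1)) / χs) := by
  rw [div_eq_iff hne, nek_eq_nekProd, nek_eq_nekProd]
  set F := nekFactor (u1 / u2) q1 q2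
  have hbox : ∀ i ∈ Icc 1 Nl, ∀ j ∈ Icc 1 (lam i), _ := fun i hi j hj =>
    S_mul_nekFactor_box hS hq1 hq2 hu2 hk1 hχs (mem_Icc.1 hi).1 (mem_Icc.1 hj).1
      (hgen i j (mem_Icc.1 hi).1 (mem_Icc.1 hj).1 (mem_Icc.1 hj).2)
  have hP1 : ∏ i ∈ Icc 1 Nl, ∏ j ∈ Icc 1 (lam i),
      (F (i - k) (j - 1 - nu k) * F (i + 1 - k) (j - nu k)) ≠ 0 :=
    prod_ne_zero_iff.2 fun i hi => prod_ne_zero_iff.2 fun j hj => (hbox i hi j hj).2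
  have hSP : (∏ i ∈ Icc 1 Nl, ∏ j ∈ Icc 1 (lam i), S (u1 * q1 ^ (i - 1) * q2 ^ (j - 1) / χs))
      * ∏ i ∈ Icc 1 Nl, ∏ j ∈ Icc 1 (lam i), (F (i - k) (j - 1 - nu k) * F (i + 1 - k) (j - nu k))
      = ∏ i ∈ Icc 1 Nl, ∏ j ∈ Icc 1 (lam i),
          (F (i + 1 - k) (j - 1 - nu k) * F (i - k) (j - nu k)) := by
    rw [← prod_mul_distrib]
    exact prod_congr rfl fun i hi => by
      rw [← prod_mul_distrib]
      exact prod_congr rfl fun j hj => (hbox i hi j hj).1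
  apply mul_right_cancel₀ hP1
  rw [nekProd_addBox F hlam hNl hnu hNn hk1 hk2 haddable hnu',
    one_sub_div_eq_nekFactor hq1 hq2 hu2 hk1 hχs, ← hSP]
  ring

/-- Let `λ, ν` be partitions, `q1, q2, u1, u2 ∈ ℂˣ` generic, and let
`s = (k, ν_k + 1)` be an addable box of `ν` with content `χ_s = u2 q1^{k-1} q2^{ν_k}`.
Then `N_{λ,ν+s}(u1/u2; q1,q2) / N_{λν}(u1/u2; q1,q2) = Y_λ(χ_s, u1)`, where
`Y_λ(z,u) = (1 - u/z) ∏_{(i,j)∈λ} S(u q1^{i-1} q2^{j-1}/z)` and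
`S(w) = (1-q1 w)(1-q2 w)/((1-w)(1-q1 q2 w))`. -/
theorem stmt18 (q1 q2 u1 u2 : ℂ)
    (hq1 : q1 ≠ 0) (hq2 : q2 ≠ 0) (hu1 : u1 ≠ 0) (hu2 : u2 ≠ 0)
    (Nl Nn : ℕ) (lam nu : ℕ → ℕ)
    (hlam : ∀ i j : ℕ, i ≤ j → lam j ≤ lam i) (hNl : ∀ i : ℕ, Nl < i → lam i = 0)
    (hnu : ∀ i j : ℕ, i ≤ j → nu j ≤ nu i) (hNn : ∀ i : ℕ, Nn < i → nu i = 0)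
    (k : ℕ) (hk1 : 1 ≤ k) (hk2 : k ≤ Nn + 1)
    (haddable : k = 1 ∨ nu k < nu (k - 1))
    (nu' : ℕ → ℕ) (hnu' : ∀ i : ℕ, nu' i = if i = k then nu i + 1 else nu i)
    (χs : ℂ) (hχs : χs = u2 * q1 ^ (k - 1) * q2 ^ (nu k))
    (S : ℂ → ℂ)
    (hS : ∀ w : ℂ, S w = ((1 - q1 * w) * (1 - q2 * w)) / ((1 - w) * (1 - q1 * q2 * w)))
    (hgen : ∀ i j : ℕ, 1 ≤ i → 1 ≤ j → j ≤ lam i →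
      1 - (u1 * q1 ^ (i - 1) * q2 ^ (j - 1)) / χs ≠ 0 ∧
      1 - q1 * q2 * (u1 * q1 ^ (i - 1) * q2 ^ (j - 1)) / χs ≠ 0)
    (hne : nek (u1 / u2) q1 q2 Nl Nn lam nu ≠ 0) :
    nek (u1 / u2) q1 q2 Nl (Nn + 1) lam nu' / nek (u1 / u2) q1 q2 Nl Nn lam nu
      = (1 - u1 / χs) *
          ∏ i ∈ Finset.Icc 1 Nl, ∏ j ∈ Finset.Icc 1 (lam i),
            S ((u1 * q1 ^ (i - 1) * q2 ^ (j - 1)) / χs) :=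
  stmt18_general q1 q2 u1 u2 hq1 hq2 hu2 Nl Nn lam nu hlam hNl hnu hNn k hk1 hk2 haddable nu' hnu'
    χs hχs S hS hgen hne
end
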